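/- arXiv:2506.01404 — 4 statements merged into one kernel-verified Lean document; each statement's English description precedes it below -/
import Mathlib

section
/- Let N ≥ 1 and T ≥ 1, fix t with 1 ≤ t ≤ T, and let φ_t, …, φ_T be real numbers. On a probability space, let S_0, …, S_{T−1} be independent random real N×N matrices, each almost surely bounded in spectral norm and each with mean E[S_τ] = S̄. Define the random matrix H = Σ_{τ=t}^{T} φ_τ (S_{τ−1} S_{τ−2} ⋯ S_t) (the product being I when τ = t) and G = Hᵀ H. Let σ ≥ 0, let n be a complex random N-vector independent of (S_0, …, S_{T−1}) with E[n] = 0 and E[n nᴴ] = σ² I, let D be a real diagonal N×N matrix, and set ỹ = H (S_{t−1} − D) n. Then E[‖ỹ‖²] = σ² ( tr( E[ G S_{t−1} S_{t−1}ᵀ ] ) + tr( E[G] D² ) − 2 tr( E[G] S̄ D ) ). -/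
open MeasureTheory ProbabilityTheory Matrix
open scoped BigOperators ComplexConjugate

/-- The spectral norm (Euclidean operator norm) of a real `N × N` matrix. -/
noncomputable def specNormR {N : ℕ} (A : Matrix (Fin N) (Fin N) ℝ) : ℝ :=
  ‖Matrix.toEuclideanCLM (𝕜 := ℝ) (n := Fin N) A‖

instance matrixMeasurableSpace {m n α : Type*} [MeasurableSpace α] :
    MeasurableSpace (Matrix m n α) :=
  inferInstanceAs (MeasurableSpace (m → n → α))

/-- `prodDesc S a ω k = S_{a+k−1} ⋯ S_{a+1} S_a` (evaluated at `ω`), the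
backward product of `k` consecutive random shift operators starting at index
`a`; the empty product (`k = 0`) is the identity. -/
def prodDesc {N : ℕ} {Ω : Type*} (S : ℕ → Ω → Matrix (Fin N) (Fin N) ℝ)
    (a : ℕ) (ω : Ω) : ℕ → Matrix (Fin N) (Fin N) ℝ
  | 0 => 1
  | k + 1 => S (a + k) ω * prodDesc S a ω k

/-- Entrywise expectation of a random real matrix. -/
noncomputable def EM {Ω : Type*} [MeasurableSpace Ω] (μ : Measure Ω) {N : ℕ}
    (X : Ω → Matrix (Fin N) (Fin N) ℝ) : Matrix (Fin N) (Fin N) ℝ :=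
  Matrix.of fun i j => ∫ ω, X ω i j ∂μ

namespace Stmt8Aux

variable {N : ℕ} {Ω : Type*} [MeasurableSpace Ω] {μ : MeasureTheory.Measure Ω}

lemma abs_entry_le_specNormR {N : ℕ} (A : Matrix (Fin N) (Fin N) ℝ) (i j : Fin N) :
    |A i j| ≤ specNormR A := by
  classical
  have h := (Matrix.toEuclideanCLM (𝕜 := ℝ) (n := Fin N) A).le_opNorm
      (EuclideanSpace.single j (1:ℝ))
  rw [PiLp.norm_single, norm_one, mul_one] at h
  have h2 : |A i j| ≤ ‖(Matrix.toEuclideanCLM (𝕜 := ℝ) (n := Fin N) A)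
      (EuclideanSpace.single j (1:ℝ))‖ := by
    have he : (Matrix.toEuclideanCLM (𝕜 := ℝ) (n := Fin N) A
        (EuclideanSpace.single j (1:ℝ))) i = A i j := by
      show (A *ᵥ Pi.single j (1:ℝ)) i = A i j
      rw [Matrix.mulVec_single]
      exact mul_one _
    rw [← he, ← Real.norm_eq_abs]
    exact PiLp.norm_apply_le _ i
  exact h2.trans h

/-- Deterministic descending product. -/
def prodD {N : ℕ} (f : ℕ → Matrix (Fin N) (Fin N) ℝ) (a : ℕ) : ℕ → Matrix (Fin N) (Fin N) ℝ
  | 0 => 1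
  | k + 1 => f (a + k) * prodD f a k

lemma prodDesc_eq_prodD {Ω : Type*} (S : ℕ → Ω → Matrix (Fin N) (Fin N) ℝ) (a : ℕ) (ω : Ω) :
    ∀ k, prodDesc S a ω k = prodD (fun τ => S τ ω) a k
  | 0 => rfl
  | k + 1 => by rw [prodDesc, prodD, prodDesc_eq_prodD S a ω k]

lemma prodD_congr {f g : ℕ → Matrix (Fin N) (Fin N) ℝ} (a : ℕ) :
    ∀ k, (∀ τ, a ≤ τ → τ < a + k → f τ = g τ) → prodD f a k = prodD g a k
  | 0, _ => rfl
  | k + 1, h => by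
      rw [prodD, prodD, h (a + k) (Nat.le_add_right _ _) (by omega),
        prodD_congr a k fun τ h1 h2 => h τ h1 (by omega)]

/-- Measurable with a.e.-uniformly-bounded entries. -/
structure GoodM (μ : MeasureTheory.Measure Ω) (X : Ω → Matrix (Fin N) (Fin N) ℝ) : Prop where
  meas : ∀ i j, Measurable fun ω => X ω i j
  bound : ∃ C : ℝ, ∀ᵐ ω ∂μ, ∀ i j, |X ω i j| ≤ C

lemma GoodM.congr {X Y : Ω → Matrix (Fin N) (Fin N) ℝ} (h : ∀ ω, X ω = Y ω)
    (hX : GoodM μ X) : GoodM μ Y := by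
  have : X = Y := funext h
  exact this ▸ hX

lemma GoodM.const (A : Matrix (Fin N) (Fin N) ℝ) : GoodM μ (fun _ => A) := by
  refine ⟨fun i j => measurable_const, ⟨∑ p : Fin N × Fin N, |A p.1 p.2|,
    MeasureTheory.ae_of_all _ fun ω i j => ?_⟩⟩
  exact Finset.single_le_sum (f := fun p : Fin N × Fin N => |A p.1 p.2|)
    (fun p _ => abs_nonneg _) (Finset.mem_univ (i, j))

lemma GoodM.mul {X Y : Ω → Matrix (Fin N) (Fin N) ℝ} (hX : GoodM μ X) (hY : GoodM μ Y) :
    GoodM μ (fun ω => X ω * Y ω) := by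
  obtain ⟨Cx, hCx⟩ := hX.bound
  obtain ⟨Cy, hCy⟩ := hY.bound
  constructor
  · intro i j
    have : (fun ω => (X ω * Y ω) i j) = fun ω => ∑ l, X ω i l * Y ω l j := by
      funext ω; rw [Matrix.mul_apply]
    rw [this]
    exact Finset.measurable_sum _ fun l _ => (hX.meas i l).mul (hY.meas l j)
  · refine ⟨(N : ℝ) * (|Cx| * |Cy|), ?_⟩
    filter_upwards [hCx, hCy] with ω h1 h2 i j
    rw [Matrix.mul_apply]
    calc |∑ l, X ω i l * Y ω l j| ≤ ∑ l, |X ω i l * Y ω l j| := Finset.abs_sum_le_sum_abs _ _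
    _ ≤ ∑ _l : Fin N, |Cx| * |Cy| := by
        refine Finset.sum_le_sum fun l _ => ?_
        rw [abs_mul]
        exact mul_le_mul ((h1 i l).trans (le_abs_self _)) ((h2 l j).trans (le_abs_self _))
          (abs_nonneg _) (abs_nonneg _)
    _ = (N : ℝ) * (|Cx| * |Cy|) := by simp [Finset.sum_const, nsmul_eq_mul]

lemma GoodM.transpose {X : Ω → Matrix (Fin N) (Fin N) ℝ} (hX : GoodM μ X) :
    GoodM μ (fun ω => (X ω)ᵀ) := by
  obtain ⟨C, hC⟩ := hX.bound
  exact ⟨fun i j => hX.meas j i, ⟨C, by filter_upwards [hC] with ω h i j; exact h j i⟩⟩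

lemma GoodM.sub {X Y : Ω → Matrix (Fin N) (Fin N) ℝ} (hX : GoodM μ X) (hY : GoodM μ Y) :
    GoodM μ (fun ω => X ω - Y ω) := by
  obtain ⟨Cx, hCx⟩ := hX.bound
  obtain ⟨Cy, hCy⟩ := hY.bound
  constructor
  · intro i j
    exact ((hX.meas i j).sub (hY.meas i j) : Measurable fun ω => X ω i j - Y ω i j)
  · refine ⟨Cx + Cy, ?_⟩
    filter_upwards [hCx, hCy] with ω h1 h2 i j
    exact (abs_sub (X ω i j) (Y ω i j)).trans (add_le_add (h1 i j) (h2 i j))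

lemma GoodM.smul {X : Ω → Matrix (Fin N) (Fin N) ℝ} (c : ℝ) (hX : GoodM μ X) :
    GoodM μ (fun ω => c • X ω) := by
  obtain ⟨C, hC⟩ := hX.bound
  constructor
  · intro i j
    exact (measurable_const.mul (hX.meas i j) : Measurable fun ω => c * X ω i j)
  · refine ⟨|c| * C, ?_⟩
    filter_upwards [hC] with ω h i j
    rw [Matrix.smul_apply, smul_eq_mul, abs_mul]
    exact mul_le_mul_of_nonneg_left (h i j) (abs_nonneg _)

lemma GoodM.sum {ι : Type*} (s : Finset ι) (X : ι → Ω → Matrix (Fin N) (Fin N) ℝ)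
    (hX : ∀ τ ∈ s, GoodM μ (X τ)) : GoodM μ (fun ω => ∑ τ ∈ s, X τ ω) := by
  classical
  induction s using Finset.induction_on with
  | empty => exact (GoodM.const 0).congr (fun ω => by simp)
  | insert τ s hτ ih =>
      have h1 := hX τ (Finset.mem_insert_self τ s)
      have h2 := ih fun τ' hτ' => hX τ' (Finset.mem_insert_of_mem hτ')
      have : GoodM μ fun ω => X τ ω + ∑ τ' ∈ s, X τ' ω := by
        obtain ⟨C1, hC1⟩ := h1.bound; obtain ⟨C2, hC2⟩ := h2.bound
        constructor
        · intro i j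
          exact ((h1.meas i j).add (h2.meas i j) :
            Measurable fun ω => X τ ω i j + (∑ τ' ∈ s, X τ' ω) i j)
        · refine ⟨C1 + C2, ?_⟩
          filter_upwards [hC1, hC2] with ω g1 g2 i j
          exact (abs_add_le _ _).trans (add_le_add (g1 i j) (g2 i j))
      exact this.congr fun ω => by rw [Finset.sum_insert hτ]

/-- Scalar version. -/
structure GoodR (μ : MeasureTheory.Measure Ω) (f : Ω → ℝ) : Prop where
  meas : Measurable f
  bound : ∃ C : ℝ, ∀ᵐ ω ∂μ, |f ω| ≤ C

lemma GoodM.entry {X : Ω → Matrix (Fin N) (Fin N) ℝ} (hX : GoodM μ X) (i j : Fin N) :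
    GoodR μ (fun ω => X ω i j) := by
  obtain ⟨C, hC⟩ := hX.bound
  exact ⟨hX.meas i j, ⟨C, by filter_upwards [hC] with ω h; exact h i j⟩⟩

lemma GoodR.mul {f g : Ω → ℝ} (hf : GoodR μ f) (hg : GoodR μ g) :
    GoodR μ (fun ω => f ω * g ω) := by
  obtain ⟨Cf, hCf⟩ := hf.bound
  obtain ⟨Cg, hCg⟩ := hg.bound
  refine ⟨hf.meas.mul hg.meas, ⟨|Cf| * |Cg|, ?_⟩⟩
  filter_upwards [hCf, hCg] with ω h1 h2
  rw [abs_mul]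
  exact mul_le_mul ((h1).trans (le_abs_self _)) ((h2).trans (le_abs_self _))
    (abs_nonneg _) (abs_nonneg _)

lemma GoodR.integrable [MeasureTheory.IsFiniteMeasure μ] {f : Ω → ℝ} (hf : GoodR μ f) :
    MeasureTheory.Integrable f μ := by
  obtain ⟨C, hC⟩ := hf.bound
  exact ⟨hf.meas.aestronglyMeasurable,
    MeasureTheory.HasFiniteIntegral.of_bounded (C := C)
      (by filter_upwards [hC] with ω h; rwa [Real.norm_eq_abs])⟩

lemma measurable_prodD_entry {α : Type*} [MeasurableSpace α]
    (F : ℕ → α → Matrix (Fin N) (Fin N) ℝ)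
    (hF : ∀ τ i j, Measurable fun x => F τ x i j) (a : ℕ) :
    ∀ (k : ℕ) (i j : Fin N), Measurable fun x => prodD (fun τ => F τ x) a k i j
  | 0, i, j => by
      simp only [prodD]
      exact measurable_const
  | k + 1, i, j => by
      have : (fun x => prodD (fun τ => F τ x) a (k + 1) i j)
          = fun x => ∑ l, F (a + k) x i l * prodD (fun τ => F τ x) a k l j := by
        funext x; rw [prodD, Matrix.mul_apply]
      rw [this]
      exact Finset.measurable_sum _ fun l _ =>
        (hF _ i l).mul (measurable_prodD_entry F hF a k l j)

/-- The (deterministic) filter matrix built from a family of shift matrices. -/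
def Hv {N : ℕ} (φ : ℕ → ℝ) (t T : ℕ) (f : ℕ → Matrix (Fin N) (Fin N) ℝ) :
    Matrix (Fin N) (Fin N) ℝ :=
  ∑ τ ∈ Finset.Icc t T, φ τ • prodD f t (τ - t)

lemma Hv_congr (φ : ℕ → ℝ) (t T : ℕ) {f g : ℕ → Matrix (Fin N) (Fin N) ℝ}
    (h : ∀ τ', t ≤ τ' → τ' < T → f τ' = g τ') : Hv φ t T f = Hv φ t T g := by
  refine Finset.sum_congr rfl fun τ hτ => ?_
  rw [Finset.mem_Icc] at hτ
  rw [prodD_congr t (τ - t) fun τ' h1 h2 => h τ' h1 (by omega)]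

lemma measurable_Hv_entry {α : Type*} [MeasurableSpace α]
    (F : ℕ → α → Matrix (Fin N) (Fin N) ℝ)
    (hF : ∀ τ i j, Measurable fun x => F τ x i j) (φ : ℕ → ℝ) (t T : ℕ) (i j : Fin N) :
    Measurable fun x => Hv φ t T (fun τ => F τ x) i j := by
  have : (fun x => Hv φ t T (fun τ => F τ x) i j)
      = fun x => ∑ τ ∈ Finset.Icc t T, φ τ * prodD (fun τ' => F τ' x) t (τ - t) i j := by
    funext x
    rw [Hv, Matrix.sum_apply]
    exact Finset.sum_congr rfl fun τ _ => rfl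
  rw [this]
  exact Finset.measurable_sum _ fun τ _ =>
    measurable_const.mul (measurable_prodD_entry F hF t (τ - t) i j)

/-- Extension of a partially-indexed family of matrices to all of `ℕ`. -/
def extF {N : ℕ} {ι : Type*} (P : ℕ → Prop) [DecidablePred P]
    (e : (τ : ℕ) → P τ → ι) (w : ι → Matrix (Fin N) (Fin N) ℝ) (τ : ℕ) :
    Matrix (Fin N) (Fin N) ℝ :=
  if h : P τ then w (e τ h) else 0

lemma extF_pos {N : ℕ} {ι : Type*} (P : ℕ → Prop) [DecidablePred P]
    (e : (τ : ℕ) → P τ → ι) (w : ι → Matrix (Fin N) (Fin N) ℝ) (τ : ℕ) (h : P τ) :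
    extF P e w τ = w (e τ h) := dif_pos h

lemma measurable_extF_entry {N : ℕ} {ι : Type*} (P : ℕ → Prop) [DecidablePred P]
    (e : (τ : ℕ) → P τ → ι) (τ : ℕ) (i j : Fin N) :
    Measurable fun w : ι → Matrix (Fin N) (Fin N) ℝ => extF P e w τ i j := by
  unfold extF
  split_ifs with h
  · exact ((measurable_pi_apply (e τ h)).eval).eval
  · simp only [Matrix.zero_apply]
    exact measurable_const

lemma trace_expand {N : ℕ} (A S' D : Matrix (Fin N) (Fin N) ℝ) (hD : Dᵀ = D) :
    Matrix.trace ((A * (S' - D))ᵀ * (A * (S' - D)))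
      = Matrix.trace (Aᵀ * A * (S' * S'ᵀ)) + Matrix.trace (Aᵀ * A * D ^ 2)
        - 2 * Matrix.trace (Aᵀ * A * (S' * D)) := by
  have h1 : (A * (S' - D))ᵀ * (A * (S' - D))
      = (S' - D)ᵀ * (Aᵀ * A * (S' - D)) := by
    rw [Matrix.transpose_mul]; rw [Matrix.mul_assoc, Matrix.mul_assoc]
  rw [h1, Matrix.trace_mul_comm]
  have h2 : Aᵀ * A * (S' - D) * (S' - D)ᵀ
      = Aᵀ * A * (S' * S'ᵀ) + Aᵀ * A * D ^ 2
        - (Aᵀ * A * (S' * D) + Aᵀ * A * (D * S'ᵀ)) := by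
    rw [Matrix.transpose_sub, hD, pow_two]
    noncomm_ring
  rw [h2, Matrix.trace_sub, Matrix.trace_add, Matrix.trace_add]
  have h3 : Matrix.trace (Aᵀ * A * (D * S'ᵀ)) = Matrix.trace (Aᵀ * A * (S' * D)) := by
    have : Aᵀ * A * (D * S'ᵀ) = ((S' * D) * (Aᵀ * A))ᵀ := by
      rw [Matrix.transpose_mul, Matrix.transpose_mul, Matrix.transpose_mul, hD,
        Matrix.transpose_transpose]
    rw [this, Matrix.trace_transpose, Matrix.trace_mul_comm]
  rw [h3]; ring

lemma sum_sq_eq_trace {N : ℕ} (M : Matrix (Fin N) (Fin N) ℝ) :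
    ∑ i, ∑ j, M i j * M i j = Matrix.trace (Mᵀ * M) := by
  rw [Matrix.trace, Finset.sum_comm]
  refine Finset.sum_congr rfl fun j _ => ?_
  rw [Matrix.diag_apply, Matrix.mul_apply]
  rfl

end Stmt8Aux

/-- **Proposition 3**: average quantization noise power of an error-fed-back FIR
graph filter over random graphs.  With independent random shift operators
`S_0, …, S_{T−1}` (a.s. bounded in spectral norm, each with mean `S̄`),
`H = Σ_{τ=t}^{T} φ_τ S_{τ−1} ⋯ S_t`, `G = Hᵀ H`, a real diagonal matrix `D`, and
a mean-zero covariance-`σ²I` random vector `n` independent of the shifts, the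
output `ỹ = H (S_{t−1} − D) n` satisfies
`E[‖ỹ‖²] = σ² (tr E[G S_{t−1} S_{t−1}ᵀ] + tr(E[G] D²) − 2 tr(E[G] S̄ D))`. -/
theorem stmt_8 {N T t : ℕ} (hN : 1 ≤ N) (ht : 1 ≤ t) (htT : t ≤ T)
    (φ : ℕ → ℝ)
    {Ω : Type*} [MeasurableSpace Ω] (μ : Measure Ω) [IsProbabilityMeasure μ]
    (S : ℕ → Ω → Matrix (Fin N) (Fin N) ℝ)
    (hSmeas : ∀ τ, τ < T → Measurable (S τ))
    (hSindep : iIndepFun (fun τ : Fin T => S τ) μ)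
    (hSbound : ∀ τ, τ < T → ∃ C : ℝ, ∀ᵐ ω ∂μ, specNormR (S τ ω) ≤ C)
    (Sbar : Matrix (Fin N) (Fin N) ℝ)
    (hSmean : ∀ τ, τ < T → ∀ i j, ∫ ω, S τ ω i j ∂μ = Sbar i j)
    (H : Ω → Matrix (Fin N) (Fin N) ℝ)
    (hH : ∀ ω, H ω = ∑ τ ∈ Finset.Icc t T, φ τ • prodDesc S t ω (τ - t))
    (σ : ℝ) (hσ : 0 ≤ σ)
    (n : Ω → Fin N → ℂ) (hnmeas : Measurable n)
    (hnindep : IndepFun (fun ω => fun τ : Fin T => S τ ω) n μ)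
    (hnint : ∀ i, Integrable (fun ω => n ω i) μ)
    (hmean : ∀ i, ∫ ω, n ω i ∂μ = 0)
    (hcovint : ∀ i j, Integrable (fun ω => n ω i * conj (n ω j)) μ)
    (hcov : ∀ i j, ∫ ω, n ω i * conj (n ω j) ∂μ
        = (σ ^ 2 : ℂ) * (if i = j then 1 else 0))
    (D : Matrix (Fin N) (Fin N) ℝ) (hD : D.IsDiag)
    (y : Ω → Fin N → ℂ)
    (hy : ∀ ω, y ω = ((H ω * (S (t - 1) ω - D)).map Complex.ofReal) *ᵥ n ω) :
    ∫ ω, ∑ i, ‖y ω i‖ ^ 2 ∂μ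
      = σ ^ 2 *
        (Matrix.trace (EM μ (fun ω => (H ω)ᵀ * H ω * (S (t - 1) ω * (S (t - 1) ω)ᵀ)))
          + Matrix.trace (EM μ (fun ω => (H ω)ᵀ * H ω) * D ^ 2)
          - 2 * Matrix.trace (EM μ (fun ω => (H ω)ᵀ * H ω) * (Sbar * D))) := by
  classical
  have htT1 : t - 1 < T := by omega
  -- goodness of the basic random matrices
  have hSgood : ∀ τ, τ < T → Stmt8Aux.GoodM μ (S τ) := by
    intro τ hτ
    refine ⟨fun i j => ((hSmeas τ hτ).eval).eval, ?_⟩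
    obtain ⟨C, hC⟩ := hSbound τ hτ
    refine ⟨C, ?_⟩
    filter_upwards [hC] with ω h i j
    exact (Stmt8Aux.abs_entry_le_specNormR _ i j).trans h
  have hHgood : Stmt8Aux.GoodM μ H := by
    have hp : ∀ k, t + k ≤ T → Stmt8Aux.GoodM μ (fun ω => prodDesc S t ω k) := by
      intro k
      induction k with
      | zero => exact fun _ => (Stmt8Aux.GoodM.const 1).congr fun ω => rfl
      | succ k ih => exact fun hk =>
          ((hSgood (t + k) (by omega)).mul (ih (by omega))).congr fun ω => rfl
    refine (Stmt8Aux.GoodM.sum (Finset.Icc t T) (fun τ ω => φ τ • prodDesc S t ω (τ - t))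
      ?_).congr fun ω => (hH ω).symm
    intro τ hτ
    rw [Finset.mem_Icc] at hτ
    exact Stmt8Aux.GoodM.smul (φ τ) (hp (τ - t) (by omega))
  have hS'good := hSgood (t - 1) htT1
  have hMgood : Stmt8Aux.GoodM μ (fun ω => H ω * (S (t - 1) ω - D)) :=
    hHgood.mul (hS'good.sub (Stmt8Aux.GoodM.const D))
  have hGgood : Stmt8Aux.GoodM μ (fun ω => (H ω)ᵀ * H ω) := hHgood.transpose.mul hHgood
  -- H in terms of Hv
  have hHv : ∀ ω, H ω = Stmt8Aux.Hv φ t T (fun τ => S τ ω) := by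
    intro ω
    rw [hH, Stmt8Aux.Hv]
    exact Finset.sum_congr rfl fun τ _ => by rw [Stmt8Aux.prodDesc_eq_prodD]
  -- pointwise expansion of the squared norm
  have hyi : ∀ ω (i : Fin N), y ω i = ∑ j, ((H ω * (S (t - 1) ω - D)) i j : ℂ) * n ω j := by
    intro ω i
    rw [hy]
    simp [Matrix.mulVec, dotProduct, Matrix.map_apply]
  have hptwise : ∀ ω, ∑ i, ‖y ω i‖ ^ 2
      = ∑ i, ∑ j, ∑ k, ((H ω * (S (t - 1) ω - D)) i j * (H ω * (S (t - 1) ω - D)) i k)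
          * (n ω j * (starRingEnd ℂ) (n ω k)).re := by
    intro ω
    refine Finset.sum_congr rfl fun i _ => ?_
    have hrew : ∀ (a b : ℝ) (x z : ℂ),
        (↑a * x) * (starRingEnd ℂ) (↑b * z) = ((a * b : ℝ) : ℂ) * (x * (starRingEnd ℂ) z) := by
      intro a b x z
      rw [(starRingEnd ℂ).map_mul, Complex.conj_ofReal, Complex.ofReal_mul]
      ring
    calc ‖y ω i‖ ^ 2 = (y ω i * (starRingEnd ℂ) (y ω i)).re := by
          rw [Complex.mul_conj, Complex.ofReal_re, Complex.sq_norm]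
    _ = _ := by
        rw [hyi ω i, map_sum, Finset.sum_mul_sum, Complex.re_sum]
        refine Finset.sum_congr rfl fun j _ => ?_
        rw [Complex.re_sum]
        refine Finset.sum_congr rfl fun k _ => ?_
        rw [hrew, Complex.re_ofReal_mul]
  -- integrability of the summands
  have hMR : ∀ i j k : Fin N, Stmt8Aux.GoodR μ (fun ω =>
      (H ω * (S (t - 1) ω - D)) i j * (H ω * (S (t - 1) ω - D)) i k) :=
    fun i j k => (hMgood.entry i j).mul (hMgood.entry i k)
  have hreint : ∀ j k : Fin N, Integrable (fun ω => (n ω j * (starRingEnd ℂ) (n ω k)).re) μ := by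
    intro j k
    have h := (hcovint j k).re
    simpa [RCLike.re_to_complex] using h
  have hTint : ∀ i j k : Fin N, Integrable (fun ω =>
      ((H ω * (S (t - 1) ω - D)) i j * (H ω * (S (t - 1) ω - D)) i k)
        * (n ω j * (starRingEnd ℂ) (n ω k)).re) μ := by
    intro i j k
    obtain ⟨C, hC⟩ := (hMR i j k).bound
    exact (hreint j k).bdd_mul ((hMR i j k).meas.aestronglyMeasurable)
      (by filter_upwards [hC] with ω h; rwa [Real.norm_eq_abs])
  -- independence from the noise
  have hcomp1 : ∀ ω, H ω * (S (t - 1) ω - D)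
      = Stmt8Aux.Hv φ t T (Stmt8Aux.extF (fun τ => τ < T) (fun τ h => (⟨τ, h⟩ : Fin T))
            (fun τ : Fin T => S τ ω))
        * (Stmt8Aux.extF (fun τ => τ < T) (fun τ h => (⟨τ, h⟩ : Fin T))
            (fun τ : Fin T => S τ ω) (t - 1) - D) := by
    intro ω
    have hext : ∀ τ', τ' < T → Stmt8Aux.extF (fun τ => τ < T) (fun τ h => (⟨τ, h⟩ : Fin T))
        (fun τ : Fin T => S τ ω) τ' = S τ' ω := fun τ' h => Stmt8Aux.extF_pos (fun τ => τ < T) _ _ _ h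
    rw [hext (t - 1) htT1, hHv ω,
      Stmt8Aux.Hv_congr φ t T (f := fun τ => S τ ω) fun τ' h1 h2 => (hext τ' h2).symm]
  have hindepC : ∀ i j k : Fin N, IndepFun
      (fun ω => (H ω * (S (t - 1) ω - D)) i j * (H ω * (S (t - 1) ω - D)) i k)
      (fun ω => (n ω j * (starRingEnd ℂ) (n ω k)).re) μ := by
    intro i j k
    have hone : ∀ (a b : Fin N), Measurable fun v : Fin T → Matrix (Fin N) (Fin N) ℝ =>
        (Stmt8Aux.Hv φ t T (Stmt8Aux.extF (fun τ => τ < T) (fun τ h => (⟨τ, h⟩ : Fin T)) v)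
          * (Stmt8Aux.extF (fun τ => τ < T) (fun τ h => (⟨τ, h⟩ : Fin T)) v (t - 1) - D)) a b := by
      intro a b
      have : (fun v : Fin T → Matrix (Fin N) (Fin N) ℝ =>
          (Stmt8Aux.Hv φ t T (Stmt8Aux.extF (fun τ => τ < T) (fun τ h => (⟨τ, h⟩ : Fin T)) v)
            * (Stmt8Aux.extF (fun τ => τ < T) (fun τ h => (⟨τ, h⟩ : Fin T)) v (t - 1) - D)) a b)
          = fun v => ∑ l, Stmt8Aux.Hv φ t T
              (fun τ => Stmt8Aux.extF (fun τ => τ < T) (fun τ h => (⟨τ, h⟩ : Fin T)) v τ) a l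
            * (Stmt8Aux.extF (fun τ => τ < T) (fun τ h => (⟨τ, h⟩ : Fin T)) v (t - 1) l b
                - D l b) := by
        funext v
        rw [Matrix.mul_apply]
        exact Finset.sum_congr rfl fun l _ => rfl
      rw [this]
      exact Finset.measurable_sum _ fun l _ =>
        (Stmt8Aux.measurable_Hv_entry
          (fun τ v => Stmt8Aux.extF (fun τ => τ < T) (fun τ h => (⟨τ, h⟩ : Fin T)) v τ)
          (fun τ a b => Stmt8Aux.measurable_extF_entry _ _ τ a b) φ t T a l).mul
        ((Stmt8Aux.measurable_extF_entry _ _ (t - 1) l b).sub measurable_const)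
    have hψm : Measurable fun w : Fin N → ℂ => (w j * (starRingEnd ℂ) (w k)).re :=
      Complex.measurable_re.comp ((measurable_pi_apply j).mul
        (Complex.continuous_conj.measurable.comp (measurable_pi_apply k)))
    have h := hnindep.comp ((hone i j).mul (hone i k)) hψm
    simp only [Pi.mul_def] at h
    have e1' : ((fun v : Fin T → Matrix (Fin N) (Fin N) ℝ =>
        (Stmt8Aux.Hv φ t T (Stmt8Aux.extF (fun τ => τ < T) (fun τ h => (⟨τ, h⟩ : Fin T)) v)
          * (Stmt8Aux.extF (fun τ => τ < T) (fun τ h => (⟨τ, h⟩ : Fin T)) v (t - 1) - D)) i j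
        * (Stmt8Aux.Hv φ t T (Stmt8Aux.extF (fun τ => τ < T) (fun τ h => (⟨τ, h⟩ : Fin T)) v)
          * (Stmt8Aux.extF (fun τ => τ < T) (fun τ h => (⟨τ, h⟩ : Fin T)) v (t - 1) - D)) i k)
        ∘ (fun ω => fun τ : Fin T => S τ ω))
        = fun ω => (H ω * (S (t - 1) ω - D)) i j * (H ω * (S (t - 1) ω - D)) i k := by
      funext ω
      simp only [Function.comp_apply]
      rw [← hcomp1 ω]
    have e2' : ((fun w : Fin N → ℂ => (w j * (starRingEnd ℂ) (w k)).re) ∘ n)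
        = fun ω => (n ω j * (starRingEnd ℂ) (n ω k)).re := rfl
    rwa [e1', e2'] at h
  -- covariance evaluation
  have hcovre : ∀ j k : Fin N, ∫ ω, (n ω j * (starRingEnd ℂ) (n ω k)).re ∂μ
      = σ ^ 2 * (if j = k then 1 else 0) := by
    intro j k
    have h := integral_re (hcovint j k)
    rw [hcov j k] at h
    simp only [RCLike.re_to_complex] at h
    rw [h]
    split_ifs with hjk
    · simp [← Complex.ofReal_pow]
    · simp
  have hterm : ∀ i j k : Fin N,
      ∫ ω, ((H ω * (S (t - 1) ω - D)) i j * (H ω * (S (t - 1) ω - D)) i k)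
        * (n ω j * (starRingEnd ℂ) (n ω k)).re ∂μ
      = (∫ ω, (H ω * (S (t - 1) ω - D)) i j * (H ω * (S (t - 1) ω - D)) i k ∂μ)
        * (σ ^ 2 * (if j = k then 1 else 0)) := by
    intro i j k
    rw [← hcovre j k]
    have h := (hindepC i j k).integral_mul_eq_mul_integral ((hMR i j k).integrable).aestronglyMeasurable
      (hreint j k).aestronglyMeasurable
    simpa using h
  -- the left-hand side
  have hLHS : ∫ ω, ∑ i, ‖y ω i‖ ^ 2 ∂μ
      = σ ^ 2 * ∑ i, ∑ j, ∫ ω, (H ω * (S (t - 1) ω - D)) i j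
          * (H ω * (S (t - 1) ω - D)) i j ∂μ := by
    rw [integral_congr_ae (Filter.Eventually.of_forall hptwise)]
    rw [integral_finset_sum _ (fun i _ => integrable_finset_sum _ fun j _ =>
      integrable_finset_sum _ fun k _ => hTint i j k)]
    rw [Finset.mul_sum]
    refine Finset.sum_congr rfl fun i _ => ?_
    rw [integral_finset_sum _ (fun j _ => integrable_finset_sum _ fun k _ => hTint i j k)]
    rw [Finset.mul_sum]
    refine Finset.sum_congr rfl fun j _ => ?_
    rw [integral_finset_sum _ fun k _ => hTint i j k]
    calc ∑ k, ∫ ω, ((H ω * (S (t - 1) ω - D)) i j * (H ω * (S (t - 1) ω - D)) i k)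
          * (n ω j * (starRingEnd ℂ) (n ω k)).re ∂μ
        = ∑ k, (∫ ω, (H ω * (S (t - 1) ω - D)) i j * (H ω * (S (t - 1) ω - D)) i k ∂μ)
          * (σ ^ 2 * (if j = k then 1 else 0)) :=
          Finset.sum_congr rfl fun k _ => hterm i j k
    _ = σ ^ 2 * ∫ ω, (H ω * (S (t - 1) ω - D)) i j * (H ω * (S (t - 1) ω - D)) i j ∂μ := by
        rw [Finset.sum_eq_single j]
        · rw [if_pos rfl]; ring
        · intro k _ hk
          rw [if_neg (Ne.symm hk)]
          ring
        · intro hj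
          exact absurd (Finset.mem_univ j) hj
  -- expectation-trace tools
  have hEMtrace : ∀ (X : Ω → Matrix (Fin N) (Fin N) ℝ), Stmt8Aux.GoodM μ X →
      Matrix.trace (EM μ X) = ∫ ω, Matrix.trace (X ω) ∂μ := by
    intro X hX
    rw [show (fun ω => Matrix.trace (X ω)) = fun ω => ∑ i, X ω i i from
      funext fun ω => rfl]
    rw [integral_finset_sum _ fun i _ => (hX.entry i i).integrable]
    rw [Matrix.trace]
    exact Finset.sum_congr rfl fun i _ => rfl
  have hEMmulconst : ∀ (X : Ω → Matrix (Fin N) (Fin N) ℝ), Stmt8Aux.GoodM μ X →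
      ∀ B : Matrix (Fin N) (Fin N) ℝ, EM μ (fun ω => X ω * B) = EM μ X * B := by
    intro X hX B
    ext i j
    show (∫ ω, (X ω * B) i j ∂μ) = (EM μ X * B) i j
    simp only [Matrix.mul_apply]
    rw [integral_finset_sum _ fun l _ => (hX.entry i l).integrable.mul_const (B l j)]
    refine Finset.sum_congr rfl fun l _ => ?_
    rw [integral_mul_const]
    rfl
  -- independence of G from S_{t-1}
  set Bset : Finset (Fin T) := Finset.univ.filter (fun τ : Fin T => t ≤ (τ : ℕ)) with hBset
  have hmemB : ∀ (τ : ℕ) (h1 : τ < T), t ≤ τ → (⟨τ, h1⟩ : Fin T) ∈ Bset := by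
    intro τ h1 h2
    simp [hBset, h2]
  have hdisj : Disjoint Bset ({⟨t - 1, htT1⟩} : Finset (Fin T)) := by
    rw [Finset.disjoint_singleton_right]
    simp only [hBset, Finset.mem_filter, Finset.mem_univ, true_and]
    omega
  have hbase := hSindep.indepFun_finset Bset ({⟨t - 1, htT1⟩} : Finset (Fin T)) hdisj
    (fun τ => hSmeas τ.1 τ.isLt)
  have hcomp2 : ∀ ω, Stmt8Aux.Hv φ t T
      (Stmt8Aux.extF (fun τ => τ < T ∧ t ≤ τ)
        (fun τ h => (⟨⟨τ, h.1⟩, hmemB τ h.1 h.2⟩ : {x // x ∈ Bset}))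
        (fun i : {x // x ∈ Bset} => S (i : Fin T) ω)) = H ω := by
    intro ω
    rw [hHv ω]
    refine (Stmt8Aux.Hv_congr φ t T fun τ' h1 h2 => ?_).symm
    exact (Stmt8Aux.extF_pos (fun τ => τ < T ∧ t ≤ τ)
      (fun τ h => (⟨⟨τ, h.1⟩, hmemB τ h.1 h.2⟩ : {x // x ∈ Bset}))
      (fun i : {x // x ∈ Bset} => S ((i : Fin T) : ℕ) ω) τ' ⟨h2, h1⟩).symm
  have hGSindep : ∀ (i j l : Fin N),
      IndepFun (fun ω => ((H ω)ᵀ * H ω) i j) (fun ω => S (t - 1) ω j l) μ := by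
    intro i j l
    have hφm : Measurable fun w : {x // x ∈ Bset} → Matrix (Fin N) (Fin N) ℝ =>
        ((Stmt8Aux.Hv φ t T (Stmt8Aux.extF (fun τ => τ < T ∧ t ≤ τ)
            (fun τ h => (⟨⟨τ, h.1⟩, hmemB τ h.1 h.2⟩ : {x // x ∈ Bset})) w))ᵀ
          * Stmt8Aux.Hv φ t T (Stmt8Aux.extF (fun τ => τ < T ∧ t ≤ τ)
            (fun τ h => (⟨⟨τ, h.1⟩, hmemB τ h.1 h.2⟩ : {x // x ∈ Bset})) w)) i j := by
      have : (fun w : {x // x ∈ Bset} → Matrix (Fin N) (Fin N) ℝ =>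
          ((Stmt8Aux.Hv φ t T (Stmt8Aux.extF (fun τ => τ < T ∧ t ≤ τ)
              (fun τ h => (⟨⟨τ, h.1⟩, hmemB τ h.1 h.2⟩ : {x // x ∈ Bset})) w))ᵀ
            * Stmt8Aux.Hv φ t T (Stmt8Aux.extF (fun τ => τ < T ∧ t ≤ τ)
              (fun τ h => (⟨⟨τ, h.1⟩, hmemB τ h.1 h.2⟩ : {x // x ∈ Bset})) w)) i j)
          = fun w => ∑ l', Stmt8Aux.Hv φ t T
              (fun τ => Stmt8Aux.extF (fun τ => τ < T ∧ t ≤ τ)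
                (fun τ h => (⟨⟨τ, h.1⟩, hmemB τ h.1 h.2⟩ : {x // x ∈ Bset})) w τ) l' i
            * Stmt8Aux.Hv φ t T
              (fun τ => Stmt8Aux.extF (fun τ => τ < T ∧ t ≤ τ)
                (fun τ h => (⟨⟨τ, h.1⟩, hmemB τ h.1 h.2⟩ : {x // x ∈ Bset})) w τ) l' j := by
        funext w
        rw [Matrix.mul_apply]
        exact Finset.sum_congr rfl fun l' _ => rfl
      rw [this]
      exact Finset.measurable_sum _ fun l' _ =>
        (Stmt8Aux.measurable_Hv_entry _
          (fun τ a b => Stmt8Aux.measurable_extF_entry _ _ τ a b) φ t T l' i).mul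
        (Stmt8Aux.measurable_Hv_entry _
          (fun τ a b => Stmt8Aux.measurable_extF_entry _ _ τ a b) φ t T l' j)
    have hψm : Measurable fun w : {x // x ∈ ({⟨t - 1, htT1⟩} : Finset (Fin T))} →
        Matrix (Fin N) (Fin N) ℝ =>
        w ⟨⟨t - 1, htT1⟩, Finset.mem_singleton_self _⟩ j l :=
      ((measurable_pi_apply _).eval).eval
    have h := hbase.comp hφm hψm
    have e1' : ((fun w : {x // x ∈ Bset} → Matrix (Fin N) (Fin N) ℝ =>
        ((Stmt8Aux.Hv φ t T (Stmt8Aux.extF (fun τ => τ < T ∧ t ≤ τ)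
            (fun τ h => (⟨⟨τ, h.1⟩, hmemB τ h.1 h.2⟩ : {x // x ∈ Bset})) w))ᵀ
          * Stmt8Aux.Hv φ t T (Stmt8Aux.extF (fun τ => τ < T ∧ t ≤ τ)
            (fun τ h => (⟨⟨τ, h.1⟩, hmemB τ h.1 h.2⟩ : {x // x ∈ Bset})) w)) i j)
        ∘ (fun a => fun i : {x // x ∈ Bset} => S ((i : Fin T) : ℕ) a))
        = fun ω => ((H ω)ᵀ * H ω) i j := by
      funext ω
      simp only [Function.comp_apply]
      rw [hcomp2 ω]
    have e2' : ((fun w : {x // x ∈ ({⟨t - 1, htT1⟩} : Finset (Fin T))} →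
        Matrix (Fin N) (Fin N) ℝ => w ⟨⟨t - 1, htT1⟩, Finset.mem_singleton_self _⟩ j l)
        ∘ (fun a => fun i : {x // x ∈ ({⟨t - 1, htT1⟩} : Finset (Fin T))} =>
            S ((i : Fin T) : ℕ) a))
        = fun ω => S (t - 1) ω j l := rfl
    rwa [e1', e2'] at h
  have hEMGS : EM μ (fun ω => ((H ω)ᵀ * H ω) * S (t - 1) ω)
      = EM μ (fun ω => (H ω)ᵀ * H ω) * Sbar := by
    ext i l
    show (∫ ω, (((H ω)ᵀ * H ω) * S (t - 1) ω) i l ∂μ)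
      = (EM μ (fun ω => (H ω)ᵀ * H ω) * Sbar) i l
    have hExp : (fun ω => (((H ω)ᵀ * H ω) * S (t - 1) ω) i l)
        = fun ω => ∑ j, ((H ω)ᵀ * H ω) i j * S (t - 1) ω j l :=
      funext fun ω => Matrix.mul_apply
    rw [hExp, integral_finset_sum _ fun j _ =>
      ((hGgood.entry i j).mul (hS'good.entry j l)).integrable, Matrix.mul_apply]
    refine Finset.sum_congr rfl fun j _ => ?_
    have h := (hGSindep i j l).integral_mul_eq_mul_integral
      (hGgood.entry i j).integrable.aestronglyMeasurable (hS'good.entry j l).integrable.aestronglyMeasurable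
    rw [show (EM μ (fun ω => (H ω)ᵀ * H ω)) i j = ∫ ω, ((H ω)ᵀ * H ω) i j ∂μ from rfl,
      ← hSmean (t - 1) htT1 j l]
    simpa using h
  -- more goodness
  have hGS'good : Stmt8Aux.GoodM μ (fun ω => (H ω)ᵀ * H ω * (S (t - 1) ω * (S (t - 1) ω)ᵀ)) :=
    hGgood.mul (hS'good.mul hS'good.transpose)
  have hGD2good : Stmt8Aux.GoodM μ (fun ω => (H ω)ᵀ * H ω * D ^ 2) :=
    hGgood.mul (Stmt8Aux.GoodM.const (D ^ 2))
  have hGSDgood : Stmt8Aux.GoodM μ (fun ω => (H ω)ᵀ * H ω * (S (t - 1) ω * D)) :=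
    hGgood.mul (hS'good.mul (Stmt8Aux.GoodM.const D))
  have hDT : Dᵀ = D := by
    ext i j
    by_cases h : i = j
    · subst h; rfl
    · rw [Matrix.transpose_apply, hD (fun hh => h hh.symm), hD h]
  have hsum_eq : ∀ ω, ∑ i, ∑ j, (H ω * (S (t - 1) ω - D)) i j * (H ω * (S (t - 1) ω - D)) i j
      = Matrix.trace ((H ω)ᵀ * H ω * (S (t - 1) ω * (S (t - 1) ω)ᵀ))
        + Matrix.trace ((H ω)ᵀ * H ω * D ^ 2)
        - 2 * Matrix.trace ((H ω)ᵀ * H ω * (S (t - 1) ω * D)) := by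
    intro ω
    rw [Stmt8Aux.sum_sq_eq_trace, Stmt8Aux.trace_expand (H ω) (S (t - 1) ω) D hDT]
  have htrint : ∀ (X : Ω → Matrix (Fin N) (Fin N) ℝ), Stmt8Aux.GoodM μ X →
      Integrable (fun ω => Matrix.trace (X ω)) μ := by
    intro X hX
    rw [show (fun ω => Matrix.trace (X ω)) = fun ω => ∑ i, X ω i i from funext fun ω => rfl]
    exact integrable_finset_sum _ fun i _ => (hX.entry i i).integrable
  -- final assembly
  rw [hLHS]
  congr 1
  calc ∑ i, ∑ j, ∫ ω, (H ω * (S (t - 1) ω - D)) i j * (H ω * (S (t - 1) ω - D)) i j ∂μ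
      = ∫ ω, ∑ i, ∑ j, (H ω * (S (t - 1) ω - D)) i j * (H ω * (S (t - 1) ω - D)) i j ∂μ := by
        rw [integral_finset_sum _ (fun i _ => integrable_finset_sum _ fun j _ =>
          ((hMgood.entry i j).mul (hMgood.entry i j)).integrable)]
        refine Finset.sum_congr rfl fun i _ => ?_
        rw [integral_finset_sum _ fun j _ =>
          ((hMgood.entry i j).mul (hMgood.entry i j)).integrable]
  _ = ∫ ω, (Matrix.trace ((H ω)ᵀ * H ω * (S (t - 1) ω * (S (t - 1) ω)ᵀ))
        + Matrix.trace ((H ω)ᵀ * H ω * D ^ 2)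
        - 2 * Matrix.trace ((H ω)ᵀ * H ω * (S (t - 1) ω * D))) ∂μ :=
      integral_congr_ae (Filter.Eventually.of_forall hsum_eq)
  _ = (∫ ω, Matrix.trace ((H ω)ᵀ * H ω * (S (t - 1) ω * (S (t - 1) ω)ᵀ)) ∂μ)
        + (∫ ω, Matrix.trace ((H ω)ᵀ * H ω * D ^ 2) ∂μ)
        - 2 * ∫ ω, Matrix.trace ((H ω)ᵀ * H ω * (S (t - 1) ω * D)) ∂μ := by
      have hInt12 : Integrable (fun ω =>
          Matrix.trace ((H ω)ᵀ * H ω * (S (t - 1) ω * (S (t - 1) ω)ᵀ))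
            + Matrix.trace ((H ω)ᵀ * H ω * D ^ 2)) μ :=
        (htrint _ hGS'good).add (htrint _ hGD2good)
      have hInt3 : Integrable (fun ω =>
          2 * Matrix.trace ((H ω)ᵀ * H ω * (S (t - 1) ω * D))) μ :=
        (htrint _ hGSDgood).const_mul 2
      rw [integral_sub hInt12 hInt3,
        integral_add (htrint _ hGS'good) (htrint _ hGD2good), integral_const_mul]
  _ = Matrix.trace (EM μ (fun ω => (H ω)ᵀ * H ω * (S (t - 1) ω * (S (t - 1) ω)ᵀ)))
        + Matrix.trace (EM μ (fun ω => (H ω)ᵀ * H ω) * D ^ 2)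
        - 2 * Matrix.trace (EM μ (fun ω => (H ω)ᵀ * H ω) * (Sbar * D)) := by
      have A1 : ∫ ω, Matrix.trace ((H ω)ᵀ * H ω * (S (t - 1) ω * (S (t - 1) ω)ᵀ)) ∂μ
          = Matrix.trace (EM μ (fun ω => (H ω)ᵀ * H ω * (S (t - 1) ω * (S (t - 1) ω)ᵀ))) :=
        (hEMtrace _ hGS'good).symm
      have A2 : ∫ ω, Matrix.trace ((H ω)ᵀ * H ω * D ^ 2) ∂μ
          = Matrix.trace (EM μ (fun ω => (H ω)ᵀ * H ω) * D ^ 2) := by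
        rw [← hEMmulconst _ hGgood (D ^ 2)]
        exact (hEMtrace _ hGD2good).symm
      have A3 : ∫ ω, Matrix.trace ((H ω)ᵀ * H ω * (S (t - 1) ω * D)) ∂μ
          = Matrix.trace (EM μ (fun ω => (H ω)ᵀ * H ω) * (Sbar * D)) := by
        have hEq : EM μ (fun ω => (H ω)ᵀ * H ω * (S (t - 1) ω * D))
            = EM μ (fun ω => (H ω)ᵀ * H ω) * (Sbar * D) := by
          have h1 : (fun ω => (H ω)ᵀ * H ω * (S (t - 1) ω * D))
              = fun ω => ((H ω)ᵀ * H ω * S (t - 1) ω) * D :=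
            funext fun ω => (Matrix.mul_assoc _ _ _).symm
          rw [h1, hEMmulconst _ (hGgood.mul hS'good) D, hEMGS, Matrix.mul_assoc]
        rw [← hEq]
        exact (hEMtrace _ hGSDgood).symm
      rw [A1, A2, A3]
end

section
/- Let N ≥ 1, let M be a real symmetric positive semidefinite N×N matrix with [M]_{ii} > 0 for every i, and let S̄ be a real N×N matrix. For a real vector α = (α_1, …, α_N), let D(α) = diag(α_1, …, α_N) and define I(α) = tr(M D(α)²) − 2 tr(M S̄ D(α)). Then for all α, I(α) ≥ − Σ_{i=1}^{N} [M S̄]_{ii}² / [M]_{ii}, with equality if and only if α_i = [M S̄]_{ii} / [M]_{ii} for every i. -/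
open Matrix
open scoped BigOperators

/-- **Theorem 3** (exact noise reduction for FIR graph filtering over random graphs).
`M` plays the role of the expected Gram matrix `E[G]` (real symmetric positive
semidefinite with strictly positive diagonal) and `S̄` the expected graph shift
operator.  The mitigation `I(α) = tr(M D(α)²) − 2 tr(M S̄ D(α))` over diagonal
feedback `D(α) = diag(α)` satisfies `I(α) ≥ −Σ_i [M S̄]_{ii}²/[M]_{ii}`, with
equality iff `α_i = [M S̄]_{ii}/[M]_{ii}` for all `i`. -/
theorem stmt_9 {N : ℕ} (hN : 1 ≤ N)
    (M : Matrix (Fin N) (Fin N) ℝ) (hM : M.PosSemidef) (hMd : ∀ i, 0 < M i i)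
    (Sbar : Matrix (Fin N) (Fin N) ℝ)
    (I : (Fin N → ℝ) → ℝ)
    (hI : ∀ α, I α = Matrix.trace (M * (Matrix.diagonal α) ^ 2)
            - 2 * Matrix.trace (M * Sbar * Matrix.diagonal α)) :
    ∀ α : Fin N → ℝ,
      I α ≥ -(∑ i, ((M * Sbar) i i) ^ 2 / M i i) ∧
      (I α = -(∑ i, ((M * Sbar) i i) ^ 2 / M i i) ↔ ∀ i, α i = (M * Sbar) i i / M i i) := by
  intro α
  set c : Fin N → ℝ := fun i => (M * Sbar) i i with hc
  have key : I α = ∑ i, (M i i * (α i)^2 - 2 * c i * α i) := by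
    rw [hI]
    have h1 : (Matrix.diagonal α)^2 = Matrix.diagonal (fun i => α i * α i) := by
      rw [sq, Matrix.diagonal_mul_diagonal]
    rw [h1]
    simp only [Matrix.trace, Matrix.diag, Matrix.mul_diagonal, Finset.mul_sum,
      ← Finset.sum_sub_distrib]
    apply Finset.sum_congr rfl
    intro i _
    ring
  have hkey : I α + ∑ i, (c i)^2 / M i i = ∑ i, M i i * (α i - c i / M i i)^2 := by
    rw [key, ← Finset.sum_add_distrib]
    apply Finset.sum_congr rfl
    intro i _
    have h0 : M i i ≠ 0 := (hMd i).ne'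
    field_simp
    ring
  have hnonneg : ∀ i ∈ Finset.univ, (0:ℝ) ≤ M i i * (α i - c i / M i i)^2 :=
    fun i _ => mul_nonneg (hMd i).le (sq_nonneg _)
  have hsum := Finset.sum_nonneg hnonneg
  refine ⟨by linarith, ?_, ?_⟩
  · intro h
    have hz : ∑ i, M i i * (α i - c i / M i i)^2 = 0 := by
      rw [← hkey, h]; ring
    intro i
    have hi := (Finset.sum_eq_zero_iff_of_nonneg hnonneg).mp hz i (Finset.mem_univ i)
    have h2 : (α i - c i / M i i)^2 = 0 := by
      rcases mul_eq_zero.mp hi with h | h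
      · exact absurd h (hMd i).ne'
      · exact h
    have h3 : α i - c i / M i i = 0 := by
      exact pow_eq_zero_iff (two_ne_zero) |>.mp h2
    linarith
  · intro h
    have hz : ∑ i, M i i * (α i - c i / M i i)^2 = 0 :=
      Finset.sum_eq_zero (fun i _ => by rw [h i]; ring)
    linarith
end

section
/- Let N ≥ 1, T ≥ 1, fix t with 1 ≤ t ≤ T, let φ_t, …, φ_T be real numbers, and let ρ > 0 and 0 ≤ p ≤ 1. On a probability space, let S_0, …, S_{T−1} be independent, identically distributed random real N×N matrices with mean S̄, such that ‖S_τ‖₂ ≤ ρ almost surely and ‖S̄‖₂ ≤ p ρ. Let H = Σ_{τ=t}^{T} φ_τ (S_{τ−1} ⋯ S_t) and G = Hᵀ H. Then tr( E[ G S_{t−1} S_{t−1}ᵀ ] ) ≤ N ρ² Σ_{τ₁=t}^{T} Σ_{τ₂=t}^{T} |φ_{τ₁}| |φ_{τ₂}| p^{|τ₁−τ₂|} ρ^{τ₁+τ₂−2t}. -/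
open MeasureTheory ProbabilityTheory Matrix
open scoped BigOperators

lemma specNormR_nonneg {N : ℕ} (A : Matrix (Fin N) (Fin N) ℝ) : 0 ≤ specNormR A :=
  norm_nonneg _

lemma specNormR_mul_le {N : ℕ} (A B : Matrix (Fin N) (Fin N) ℝ) :
    specNormR (A * B) ≤ specNormR A * specNormR B := by
  unfold specNormR
  rw [_root_.map_mul]
  exact norm_mul_le _ _

lemma specNormR_one_le {N : ℕ} : specNormR (1 : Matrix (Fin N) (Fin N) ℝ) ≤ 1 := by
  unfold specNormR
  rw [_root_.map_one]
  exact ContinuousLinearMap.norm_id_le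

lemma euclid_coord_le_norm {N : ℕ} (x : EuclideanSpace ℝ (Fin N)) (i : Fin N) :
    |x i| ≤ ‖x‖ := by
  rw [EuclideanSpace.norm_eq]
  rw [← Real.sqrt_sq_eq_abs]
  apply Real.sqrt_le_sqrt
  have : |x i|^2 ≤ ∑ j, ‖x j‖^2 := by
    have := Finset.single_le_sum (f := fun j => ‖x j‖^2) (fun j _ => by positivity)
      (Finset.mem_univ i)
    simpa [Real.norm_eq_abs, sq_abs] using this
  simpa [sq_abs] using this

lemma mulVec_euclid_norm_le {N : ℕ} (A : Matrix (Fin N) (Fin N) ℝ) (q : Fin N → ℝ) :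
    ‖(WithLp.equiv 2 (Fin N → ℝ)).symm (A *ᵥ q)‖
      ≤ specNormR A * ‖(WithLp.equiv 2 (Fin N → ℝ)).symm q‖ := by
  have h := (Matrix.toEuclideanCLM (𝕜 := ℝ) (n := Fin N) A).le_opNorm
    ((WithLp.equiv 2 (Fin N → ℝ)).symm q)
  rw [WithLp.equiv_symm_apply, Matrix.toEuclideanCLM_toLp] at h
  rw [WithLp.equiv_symm_apply]; exact h

lemma entry_le_specNormR {N : ℕ} (A : Matrix (Fin N) (Fin N) ℝ) (i j : Fin N) :
    |A i j| ≤ specNormR A := by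
  have h1 : |A i j| ≤ ‖(WithLp.equiv 2 (Fin N → ℝ)).symm (A *ᵥ Pi.single j 1)‖ := by
    have := euclid_coord_le_norm ((WithLp.equiv 2 (Fin N → ℝ)).symm (A *ᵥ Pi.single j 1)) i
    simpa [Matrix.mulVec_single] using this
  have h2 := mulVec_euclid_norm_le A (Pi.single j 1)
  have h3 : ‖(WithLp.equiv 2 (Fin N → ℝ)).symm (Pi.single j (1:ℝ))‖ = 1 := by
    have : ((WithLp.equiv 2 (Fin N → ℝ)).symm (Pi.single j (1:ℝ)))
        = EuclideanSpace.single j (1:ℝ) := rfl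
    rw [this, EuclideanSpace.norm_single]; norm_num
  rw [h3, mul_one] at h2
  exact h1.trans h2

lemma col_sq_sum_le {N : ℕ} (Q : Matrix (Fin N) (Fin N) ℝ) (j : Fin N) :
    ∑ a, (Q a j)^2 ≤ specNormR Q ^ 2 := by
  have h3 : ‖(WithLp.equiv 2 (Fin N → ℝ)).symm (Pi.single j (1:ℝ))‖ = 1 := by
    have : ((WithLp.equiv 2 (Fin N → ℝ)).symm (Pi.single j (1:ℝ)))
        = EuclideanSpace.single j (1:ℝ) := rfl
    rw [this, EuclideanSpace.norm_single]; norm_num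
  have h2 := mulVec_euclid_norm_le Q (Pi.single j 1)
  rw [h3, mul_one] at h2
  have h4 : ∑ a, (Q a j)^2
      = ‖(WithLp.equiv 2 (Fin N → ℝ)).symm (Q *ᵥ Pi.single j 1)‖^2 := by
    rw [EuclideanSpace.norm_eq, Real.sq_sqrt (by positivity)]
    simp [Matrix.mulVec_single, Real.norm_eq_abs, sq_abs]
  rw [h4]
  exact pow_le_pow_left₀ (norm_nonneg _) h2 2

lemma quad_form_le {N : ℕ} (M : Matrix (Fin N) (Fin N) ℝ) (q : Fin N → ℝ) :
    |q ⬝ᵥ (M *ᵥ q)| ≤ specNormR M * ∑ a, (q a)^2 := by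
  set x := (WithLp.equiv 2 (Fin N → ℝ)).symm q with hx
  have hinner : q ⬝ᵥ (M *ᵥ q) = (inner ℝ x ((WithLp.equiv 2 (Fin N → ℝ)).symm (M *ᵥ q)) : ℝ) := by
    rw [PiLp.inner_apply]
    simp only [RCLike.inner_apply, starRingEnd_apply, star_trivial, hx, WithLp.equiv_symm_apply, PiLp.toLp_apply]
    exact Finset.sum_congr rfl (fun i _ => mul_comm _ _)
  have hcs := abs_real_inner_le_norm x ((WithLp.equiv 2 (Fin N → ℝ)).symm (M *ᵥ q))
  have hb := mulVec_euclid_norm_le M q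
  have hxq : ‖x‖^2 = ∑ a, (q a)^2 := by
    rw [EuclideanSpace.norm_eq, Real.sq_sqrt (by positivity)]
    simp [Real.norm_eq_abs, sq_abs, hx, WithLp.equiv_symm_apply, PiLp.toLp_apply]
  calc |q ⬝ᵥ (M *ᵥ q)| = |(inner ℝ x ((WithLp.equiv 2 (Fin N → ℝ)).symm (M *ᵥ q)) : ℝ)| := by rw [hinner]
    _ ≤ ‖x‖ * ‖(WithLp.equiv 2 (Fin N → ℝ)).symm (M *ᵥ q)‖ := hcs
    _ ≤ ‖x‖ * (specNormR M * ‖x‖) := by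
        apply mul_le_mul_of_nonneg_left _ (norm_nonneg _)
        rw [hx]; exact hb
    _ = specNormR M * ‖x‖^2 := by ring
    _ = specNormR M * ∑ a, (q a)^2 := by rw [hxq]


set_option synthInstance.maxHeartbeats 1000000 in
set_option maxHeartbeats 1000000 in
lemma specNormR_transpose {N : ℕ} (A : Matrix (Fin N) (Fin N) ℝ) :
    specNormR Aᵀ = specNormR A := by
  have h : Aᵀ = star A := by
    ext i j
    simp [Matrix.star_eq_conjTranspose, Matrix.conjTranspose_apply]
  unfold specNormR
  rw [h, map_star]
  rw [ContinuousLinearMap.star_eq_adjoint]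
  exact ContinuousLinearMap.adjoint.norm_map _

lemma specNormR_pow_le {N : ℕ} {A : Matrix (Fin N) (Fin N) ℝ} {r : ℝ} (hr : 0 ≤ r)
    (hA : specNormR A ≤ r) : ∀ k : ℕ, specNormR (A ^ k) ≤ r ^ k
  | 0 => by simpa using specNormR_one_le
  | k + 1 => by
    calc specNormR (A ^ (k+1)) = specNormR (A * A ^ k) := by rw [pow_succ']
      _ ≤ specNormR A * specNormR (A ^ k) := specNormR_mul_le _ _
      _ ≤ r * r ^ k := mul_le_mul hA (specNormR_pow_le hr hA k) (specNormR_nonneg _) hr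
      _ = r ^ (k+1) := (pow_succ' r k).symm

def prodD {N : ℕ} (f : ℕ → Matrix (Fin N) (Fin N) ℝ) (a : ℕ) :
    ℕ → Matrix (Fin N) (Fin N) ℝ
  | 0 => 1
  | k + 1 => f (a + k) * prodD f a k

lemma prodDesc_eq_prodD {N : ℕ} {Ω : Type*} (S : ℕ → Ω → Matrix (Fin N) (Fin N) ℝ)
    (a : ℕ) (ω : Ω) : ∀ k, prodDesc S a ω k = prodD (fun n => S n ω) a k
  | 0 => rfl
  | k + 1 => by
    show S (a+k) ω * prodDesc S a ω k = _
    rw [prodDesc_eq_prodD S a ω k]; rfl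

lemma prodD_congr {N : ℕ} {f g : ℕ → Matrix (Fin N) (Fin N) ℝ} {a : ℕ} :
    ∀ {k}, (∀ n, a ≤ n → n < a + k → f n = g n) → prodD f a k = prodD g a k
  | 0, _ => rfl
  | k + 1, h => by
    show f (a+k) * prodD f a k = g (a+k) * prodD g a k
    rw [h (a+k) (Nat.le_add_right a k) (by omega),
      prodD_congr (fun n h1 h2 => h n h1 (by omega))]

lemma prodD_split {N : ℕ} (f : ℕ → Matrix (Fin N) (Fin N) ℝ) (a n : ℕ) :
    ∀ m, prodD f a (m + n) = prodD f (a + n) m * prodD f a n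
  | 0 => by
    show prodD f a (0 + n) = 1 * prodD f a n
    rw [Nat.zero_add, one_mul]
  | m + 1 => by
    have h1 : m + 1 + n = (m + n) + 1 := by omega
    rw [h1]
    show f (a + (m + n)) * prodD f a (m + n) = (f (a + n + m) * prodD f (a+n) m) * prodD f a n
    rw [prodD_split f a n m, ← Matrix.mul_assoc,
      show a + (m + n) = a + n + m from by omega]

lemma prodD_norm_le {N : ℕ} {ρ : ℝ} (hρ : 0 ≤ ρ) {f : ℕ → Matrix (Fin N) (Fin N) ℝ} {a : ℕ} :
    ∀ {k}, (∀ n, a ≤ n → n < a + k → specNormR (f n) ≤ ρ) →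
      specNormR (prodD f a k) ≤ ρ ^ k
  | 0, _ => by simpa [prodD] using specNormR_one_le
  | k + 1, h => by
    show specNormR (f (a+k) * prodD f a k) ≤ ρ ^ (k+1)
    calc specNormR (f (a+k) * prodD f a k)
        ≤ specNormR (f (a+k)) * specNormR (prodD f a k) := specNormR_mul_le _ _
      _ ≤ ρ * ρ ^ k := mul_le_mul (h (a+k) (Nat.le_add_right a k) (by omega))
          (prodD_norm_le hρ (fun n h1 h2 => h n h1 (by omega))) (specNormR_nonneg _) hρ
      _ = ρ ^ (k+1) := (pow_succ' ρ k).symm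

lemma Measurable.matEntry {Ω : Type*} [MeasurableSpace Ω] {N : ℕ}
    {M : Ω → Matrix (Fin N) (Fin N) ℝ} (hM : Measurable M) (i j : Fin N) :
    Measurable fun ω => M ω i j :=
  (measurable_pi_apply j).comp ((measurable_pi_apply i).comp hM)

lemma measurable_matrix_of_entries {Ω : Type*} [MeasurableSpace Ω] {N : ℕ}
    {M : Ω → Matrix (Fin N) (Fin N) ℝ} (h : ∀ i j, Measurable fun ω => M ω i j) :
    Measurable M :=
  measurable_pi_lambda M fun i => measurable_pi_lambda _ fun j => h i j

lemma Measurable.matMul {Ω : Type*} [MeasurableSpace Ω] {N : ℕ}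
    {A B : Ω → Matrix (Fin N) (Fin N) ℝ} (hA : Measurable A) (hB : Measurable B) :
    Measurable fun ω => A ω * B ω := by
  apply measurable_matrix_of_entries
  intro i j
  simp only [Matrix.mul_apply]
  exact Finset.measurable_sum _ fun c _ => (hA.matEntry i c).mul (hB.matEntry c j)

lemma Measurable.matTranspose {Ω : Type*} [MeasurableSpace Ω] {N : ℕ}
    {A : Ω → Matrix (Fin N) (Fin N) ℝ} (hA : Measurable A) :
    Measurable fun ω => (A ω)ᵀ :=
  measurable_matrix_of_entries fun i j => hA.matEntry j i

lemma measurable_prodD {Ω : Type*} [MeasurableSpace Ω] {N : ℕ}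
    (F : Ω → ℕ → Matrix (Fin N) (Fin N) ℝ) (a : ℕ) :
    ∀ k, (∀ n, a ≤ n → n < a + k → Measurable fun ω => F ω n) →
      Measurable fun ω => prodD (F ω) a k
  | 0, _ => measurable_const
  | k + 1, h => by
    have : (fun ω => prodD (F ω) a (k+1)) = fun ω => F ω (a+k) * prodD (F ω) a k := rfl
    rw [this]
    exact (h (a+k) (Nat.le_add_right a k) (by omega)).matMul
      (measurable_prodD F a k (fun n h1 h2 => h n h1 (by omega)))

lemma integrable_of_ae_bound {Ω : Type*} [MeasurableSpace Ω] {μ : Measure Ω}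
    [IsProbabilityMeasure μ] {f : Ω → ℝ} (hm : AEStronglyMeasurable f μ) {C : ℝ}
    (hb : ∀ᵐ ω ∂μ, |f ω| ≤ C) : Integrable f μ :=
  (integrable_const C).mono' hm (by simpa [Real.norm_eq_abs] using hb)

lemma key_integral_mul {N T : ℕ} {Ω : Type*} [MeasurableSpace Ω] {μ : Measure Ω}
    {S : ℕ → Ω → Matrix (Fin N) (Fin N) ℝ}
    (hSmeas : ∀ τ, τ < T → Measurable (S τ))
    (hSindep : iIndepFun (fun τ : Fin T => S τ) μ)
    {a b c : ℕ} (hbc : b ≤ c) (hcT : c ≤ T)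
    (f g : (ℕ → Matrix (Fin N) (Fin N) ℝ) → ℝ)
    (hfm : Measurable f) (hgm : Measurable g)
    (hf : ∀ u u', (∀ n, a ≤ n → n < b → u n = u' n) → f u = f u')
    (hg : ∀ u u', (∀ n, b ≤ n → n < c → u n = u' n) → g u = g u') :
    ∫ ω, f (fun n => S n ω) * g (fun n => S n ω) ∂μ
      = (∫ ω, f (fun n => S n ω) ∂μ) * ∫ ω, g (fun n => S n ω) ∂μ := by
  classical
  set A : Finset (Fin T) := Finset.univ.filter (fun i : Fin T => a ≤ (i : ℕ) ∧ (i : ℕ) < b)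
    with hA
  set B : Finset (Fin T) := Finset.univ.filter (fun i : Fin T => b ≤ (i : ℕ) ∧ (i : ℕ) < c)
    with hB
  have hAB : Disjoint A B := by
    rw [Finset.disjoint_left]
    intro x hx hx'
    rw [hA, Finset.mem_filter] at hx
    rw [hB, Finset.mem_filter] at hx'
    omega
  have base := hSindep.indepFun_finset A B hAB (fun i => hSmeas i i.isLt)
  let rc : (C : Finset (Fin T)) → ({x // x ∈ C} → Matrix (Fin N) (Fin N) ℝ) →
      ℕ → Matrix (Fin N) (Fin N) ℝ :=
    fun C v n =>
      if h : n < T then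
        (if h2 : (⟨n, h⟩ : Fin T) ∈ C then v ⟨⟨n, h⟩, h2⟩ else 0)
      else 0
  have hrc_meas : ∀ C : Finset (Fin T), Measurable (rc C) := by
    intro C
    apply measurable_pi_lambda
    intro n
    by_cases h : n < T
    · by_cases h2 : (⟨n, h⟩ : Fin T) ∈ C
      · simpa only [rc, dif_pos h, dif_pos h2] using
          measurable_pi_apply (⟨⟨n, h⟩, h2⟩ : {x // x ∈ C})
      · simp only [rc, dif_pos h, dif_neg h2]; exact measurable_const
    · simp only [rc, dif_neg h]; exact measurable_const
  have hXeq : (fun ω => f (rc A (fun i => S ((i : Fin T) : ℕ) ω))) = fun ω => f (fun n => S n ω) := by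
    funext ω
    apply hf
    intro n h1 h2
    have hn : n < T := by omega
    have hmem : (⟨n, hn⟩ : Fin T) ∈ A := by
      rw [hA, Finset.mem_filter]; exact ⟨Finset.mem_univ _, h1, h2⟩
    simp only [rc, dif_pos hn, dif_pos hmem]
  have hYeq : (fun ω => g (rc B (fun i => S ((i : Fin T) : ℕ) ω))) = fun ω => g (fun n => S n ω) := by
    funext ω
    apply hg
    intro n h1 h2
    have hn : n < T := by omega
    have hmem : (⟨n, hn⟩ : Fin T) ∈ B := by
      rw [hB, Finset.mem_filter]; exact ⟨Finset.mem_univ _, h1, h2⟩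
    simp only [rc, dif_pos hn, dif_pos hmem]
  have hSA : Measurable (fun ω => fun i : {x // x ∈ A} => S ((i : Fin T) : ℕ) ω) :=
    measurable_pi_lambda _ fun i => hSmeas _ (i : Fin T).isLt
  have hSB : Measurable (fun ω => fun i : {x // x ∈ B} => S ((i : Fin T) : ℕ) ω) :=
    measurable_pi_lambda _ fun i => hSmeas _ (i : Fin T).isLt
  have hX : Measurable (fun ω => f (fun n => S n ω)) := by
    rw [← hXeq]; exact hfm.comp ((hrc_meas A).comp hSA)
  have hY : Measurable (fun ω => g (fun n => S n ω)) := by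
    rw [← hYeq]; exact hgm.comp ((hrc_meas B).comp hSB)
  have hindep : IndepFun (fun ω => f (fun n => S n ω)) (fun ω => g (fun n => S n ω)) μ := by
    have h2 := base.comp (hfm.comp (hrc_meas A)) (hgm.comp (hrc_meas B))
    have e1 : ((f ∘ rc A) ∘ fun ω (i : {x // x ∈ A}) => S ((i : Fin T) : ℕ) ω)
        = fun ω => f (rc A (fun i => S ((i : Fin T) : ℕ) ω)) := rfl
    have e2 : ((g ∘ rc B) ∘ fun ω (i : {x // x ∈ B}) => S ((i : Fin T) : ℕ) ω)
        = fun ω => g (rc B (fun i => S ((i : Fin T) : ℕ) ω)) := rfl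
    rwa [e1, e2, hXeq, hYeq] at h2
  exact IndepFun.integral_mul_eq_mul_integral hindep hX.aestronglyMeasurable hY.aestronglyMeasurable

lemma measurable_prodDesc {N T : ℕ} {Ω : Type*} [MeasurableSpace Ω]
    {S : ℕ → Ω → Matrix (Fin N) (Fin N) ℝ}
    (hSmeas : ∀ τ, τ < T → Measurable (S τ)) (c k : ℕ) (h : c + k ≤ T) :
    Measurable fun ω => prodDesc S c ω k := by
  have e : (fun ω => prodDesc S c ω k) = fun ω => prodD (fun n => S n ω) c k :=
    funext fun ω => prodDesc_eq_prodD S c ω k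
  rw [e]
  exact measurable_prodD (fun ω n => S n ω) c k (fun n h1 h2 => hSmeas n (by omega))

lemma ae_prodDesc_bound {N T : ℕ} {Ω : Type*} [MeasurableSpace Ω] {μ : Measure Ω}
    {S : ℕ → Ω → Matrix (Fin N) (Fin N) ℝ} {ρ : ℝ} (hρ : 0 ≤ ρ)
    (hSbound : ∀ τ, τ < T → ∀ᵐ ω ∂μ, specNormR (S τ ω) ≤ ρ) (c k : ℕ) (h : c + k ≤ T) :
    ∀ᵐ ω ∂μ, specNormR (prodDesc S c ω k) ≤ ρ ^ k := by
  have hall : ∀ᵐ ω ∂μ, ∀ i : Fin T, specNormR (S (i : ℕ) ω) ≤ ρ :=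
    ae_all_iff.mpr fun i => hSbound i i.isLt
  filter_upwards [hall] with ω hω
  rw [prodDesc_eq_prodD]
  exact prodD_norm_le hρ fun n h1 h2 => hω ⟨n, by omega⟩

lemma mean_prodDesc {N T : ℕ} {Ω : Type*} [MeasurableSpace Ω] {μ : Measure Ω}
    [IsProbabilityMeasure μ] {S : ℕ → Ω → Matrix (Fin N) (Fin N) ℝ}
    (hSmeas : ∀ τ, τ < T → Measurable (S τ))
    (hSindep : iIndepFun (fun τ : Fin T => S τ) μ)
    {ρ : ℝ} (hρ : 0 ≤ ρ)
    (hSbound : ∀ τ, τ < T → ∀ᵐ ω ∂μ, specNormR (S τ ω) ≤ ρ)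
    (Sbar : Matrix (Fin N) (Fin N) ℝ)
    (hSmean : ∀ τ, τ < T → ∀ i j, ∫ ω, S τ ω i j ∂μ = Sbar i j)
    (c : ℕ) : ∀ k, c + k ≤ T → ∀ a b : Fin N,
      ∫ ω, prodDesc S c ω k a b ∂μ = (Sbar ^ k) a b := by
  intro k
  induction k with
  | zero =>
    intro _ a b
    have e : (fun ω => prodDesc S c ω 0 a b) = fun _ => (1 : Matrix (Fin N) (Fin N) ℝ) a b :=
      rfl
    rw [e, integral_const, probReal_univ, pow_zero]
    simp
  | succ k ih =>
    intro hck a b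
    have hck' : c + k ≤ T := by omega
    have e1 : ∀ ω, prodDesc S c ω (k+1) a b
        = ∑ m, S (c+k) ω a m * prodDesc S c ω k m b := by
      intro ω
      rw [show prodDesc S c ω (k+1) = S (c+k) ω * prodDesc S c ω k from rfl,
        Matrix.mul_apply]
    have hmeasS : Measurable (S (c+k)) := hSmeas _ (by omega)
    have hmeasP : Measurable fun ω => prodDesc S c ω k := measurable_prodDesc hSmeas c k hck'
    have hint : ∀ m : Fin N, Integrable (fun ω => S (c+k) ω a m * prodDesc S c ω k m b) μ := by
      intro m
      apply integrable_of_ae_bound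
        (((hmeasS.matEntry a m).mul (hmeasP.matEntry m b)).aestronglyMeasurable)
        (C := ρ * ρ ^ k)
      filter_upwards [hSbound (c+k) (by omega), ae_prodDesc_bound hρ hSbound c k hck']
        with ω h1 h2
      rw [Pi.mul_apply, abs_mul]
      exact mul_le_mul ((entry_le_specNormR _ a m).trans h1)
        ((entry_le_specNormR _ m b).trans h2) (abs_nonneg _) hρ
    calc ∫ ω, prodDesc S c ω (k+1) a b ∂μ
        = ∫ ω, ∑ m, S (c+k) ω a m * prodDesc S c ω k m b ∂μ := by
          simp only [e1]
      _ = ∑ m, ∫ ω, S (c+k) ω a m * prodDesc S c ω k m b ∂μ :=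
          integral_finset_sum _ fun m _ => hint m
      _ = ∑ m, Sbar a m * (Sbar ^ k) m b := by
          apply Finset.sum_congr rfl
          intro m _
          have hkey := key_integral_mul (a := c) (b := c + k) (c := c + k + 1)
            hSmeas hSindep (by omega) (by omega)
            (fun u => prodD u c k m b) (fun u => u (c+k) a m)
            (measurable_prodD (fun (u : ℕ → Matrix (Fin N) (Fin N) ℝ) n => u n) c k
              (fun n _ _ => measurable_pi_apply n) |>.matEntry m b)
            ((measurable_pi_apply (c+k)).matEntry a m)
            (fun u u' h => by
              show prodD u c k m b = prodD u' c k m b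
              rw [prodD_congr (f := u) (g := u') (fun n h1 h2 => h n h1 (by omega))])
            (fun u u' h => by
              show u (c+k) a m = u' (c+k) a m
              rw [h (c+k) (by omega) (by omega)])
          have e2 : ∀ ω, S (c+k) ω a m * prodDesc S c ω k m b
              = prodD (fun n => S n ω) c k m b * S (c+k) ω a m := by
            intro ω
            rw [prodDesc_eq_prodD, mul_comm]
          simp only [e2]
          rw [hkey]
          have e3 : (fun ω => prodDesc S c ω k m b)
              = fun ω => prodD (fun n => S n ω) c k m b := by
            funext ω; rw [prodDesc_eq_prodD]
          rw [← e3, ih hck' m b, hSmean (c+k) (by omega) a m, mul_comm]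
      _ = (Sbar ^ (k+1)) a b := by rw [pow_succ', Matrix.mul_apply]

lemma trace_expand {N : ℕ} (R M : Matrix (Fin N) (Fin N) ℝ) :
    Matrix.trace (R * M) = ∑ a, ∑ b, R a b * M b a := by
  simp [Matrix.trace, Matrix.diag, Matrix.mul_apply]

lemma trace_mul_QQT_le {N : ℕ} (M Q : Matrix (Fin N) (Fin N) ℝ) :
    |Matrix.trace (M * (Q * Qᵀ))| ≤ specNormR M * ((N : ℝ) * specNormR Q ^ 2) := by
  have key : Matrix.trace (M * (Q * Qᵀ))
      = ∑ j, (fun a => Q a j) ⬝ᵥ (M *ᵥ fun a => Q a j) := by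
    have hdot : ∀ j, (fun a => Q a j) ⬝ᵥ (M *ᵥ fun a => Q a j)
        = ∑ a, ∑ b, Q a j * M a b * Q b j := by
      intro j
      simp only [dotProduct, Matrix.mulVec, Finset.mul_sum]
      exact Finset.sum_congr rfl fun a _ => Finset.sum_congr rfl fun b _ => by ring
    have hlhs : Matrix.trace (M * (Q * Qᵀ)) = ∑ a, ∑ b, ∑ j, Q a j * M a b * Q b j := by
      rw [trace_expand]
      refine Finset.sum_congr rfl fun a _ => Finset.sum_congr rfl fun b _ => ?_
      rw [Matrix.mul_apply, Finset.mul_sum]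
      exact Finset.sum_congr rfl fun j _ => by
        rw [Matrix.transpose_apply]; ring
    rw [hlhs]
    calc ∑ a, ∑ b, ∑ j, Q a j * M a b * Q b j
        = ∑ a, ∑ j, ∑ b, Q a j * M a b * Q b j :=
          Finset.sum_congr rfl fun a _ => Finset.sum_comm
      _ = ∑ j, ∑ a, ∑ b, Q a j * M a b * Q b j := Finset.sum_comm
      _ = ∑ j, (fun a => Q a j) ⬝ᵥ (M *ᵥ fun a => Q a j) := by
          exact Finset.sum_congr rfl fun j _ => (hdot j).symm
  rw [key]
  calc |∑ j, (fun a => Q a j) ⬝ᵥ (M *ᵥ fun a => Q a j)|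
      ≤ ∑ j, |(fun a => Q a j) ⬝ᵥ (M *ᵥ fun a => Q a j)| := Finset.abs_sum_le_sum_abs _ _
    _ ≤ ∑ _j : Fin N, specNormR M * specNormR Q ^ 2 := by
        apply Finset.sum_le_sum
        intro j _
        refine (quad_form_le M _).trans ?_
        exact mul_le_mul_of_nonneg_left (col_sq_sum_le Q j) (specNormR_nonneg _)
    _ = specNormR M * ((N : ℝ) * specNormR Q ^ 2) := by
        rw [Finset.sum_const, Finset.card_univ, Fintype.card_fin, nsmul_eq_mul]
        ring

lemma trace_sym {N : ℕ} (A B W : Matrix (Fin N) (Fin N) ℝ) (hW : Wᵀ = W) :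
    Matrix.trace (Aᵀ * B * W) = Matrix.trace (Bᵀ * A * W) := by
  rw [← Matrix.trace_transpose (Aᵀ * B * W)]
  have e : (Aᵀ * B * W)ᵀ = Wᵀ * (Bᵀ * A) := by
    simp [Matrix.transpose_mul, Matrix.mul_assoc]
  rw [e, hW, Matrix.trace_mul_comm, Matrix.mul_assoc]

lemma pair_bound {N T : ℕ} {Ω : Type*} [MeasurableSpace Ω] {μ : Measure Ω}
    [IsProbabilityMeasure μ] {S : ℕ → Ω → Matrix (Fin N) (Fin N) ℝ}
    (hSmeas : ∀ τ, τ < T → Measurable (S τ))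
    (hSindep : iIndepFun (fun τ : Fin T => S τ) μ)
    {ρ p : ℝ} (hρ : 0 < ρ) (hp0 : 0 ≤ p)
    (hSbound : ∀ τ, τ < T → ∀ᵐ ω ∂μ, specNormR (S τ ω) ≤ ρ)
    (Sbar : Matrix (Fin N) (Fin N) ℝ)
    (hSmean : ∀ τ, τ < T → ∀ i j, ∫ ω, S τ ω i j ∂μ = Sbar i j)
    (hSbar : specNormR Sbar ≤ p * ρ)
    (t k1 k : ℕ) (ht : 1 ≤ t) (hT : t + k1 + k ≤ T) :
    |∫ ω, Matrix.trace ((prodDesc S t ω k1)ᵀ * prodDesc S t ω (k1 + k) *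
        (S (t-1) ω * (S (t-1) ω)ᵀ)) ∂μ|
      ≤ (N : ℝ) * ρ^2 * p^k * ρ^(2*k1 + k) := by
  have htT : t - 1 < T := by omega
  have hk1T : t + k1 ≤ T := by omega
  have hρ' : 0 ≤ ρ := le_of_lt hρ
  set Q : Ω → Matrix (Fin N) (Fin N) ℝ := fun ω => prodDesc S t ω k1 * S (t-1) ω with hQ
  set Rr : Ω → Matrix (Fin N) (Fin N) ℝ := fun ω => prodDesc S (t+k1) ω k with hRr
  -- Step A: pointwise rewriting
  have stepA : ∀ ω, Matrix.trace ((prodDesc S t ω k1)ᵀ * prodDesc S t ω (k1 + k) *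
      (S (t-1) ω * (S (t-1) ω)ᵀ)) = Matrix.trace (Rr ω * (Q ω * (Q ω)ᵀ)) := by
    intro ω
    have hsplit : prodDesc S t ω (k1 + k) = Rr ω * prodDesc S t ω k1 := by
      rw [hRr]
      simp only [prodDesc_eq_prodD]
      rw [show k1 + k = k + k1 from by omega, prodD_split]
    rw [hsplit]
    have e : Rr ω * (Q ω * (Q ω)ᵀ)
        = (Rr ω * prodDesc S t ω k1) * (S (t-1) ω * (S (t-1) ω)ᵀ) * (prodDesc S t ω k1)ᵀ := by
      rw [hQ]
      simp only [Matrix.transpose_mul, Matrix.mul_assoc]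
    rw [← Matrix.trace_mul_cycle (Rr ω * prodDesc S t ω k1)
      (S (t-1) ω * (S (t-1) ω)ᵀ) ((prodDesc S t ω k1)ᵀ), ← e]
  -- measurability
  have hmeasP1 : Measurable fun ω => prodDesc S t ω k1 := measurable_prodDesc hSmeas t k1 hk1T
  have hmeasSs : Measurable (S (t-1)) := hSmeas _ htT
  have hmeasQ : Measurable Q := hmeasP1.matMul hmeasSs
  have hmeasR : Measurable Rr := measurable_prodDesc hSmeas (t+k1) k (by omega)
  have hmeasQQ : Measurable fun ω => Q ω * (Q ω)ᵀ := hmeasQ.matMul hmeasQ.matTranspose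
  -- ae bounds
  have haeQ : ∀ᵐ ω ∂μ, specNormR (Q ω) ≤ ρ^(k1+1) := by
    filter_upwards [ae_prodDesc_bound hρ' hSbound t k1 hk1T, hSbound (t-1) htT] with ω h1 h2
    calc specNormR (Q ω) ≤ specNormR (prodDesc S t ω k1) * specNormR (S (t-1) ω) :=
          specNormR_mul_le _ _
      _ ≤ ρ^k1 * ρ := mul_le_mul h1 h2 (specNormR_nonneg _) (by positivity)
      _ = ρ^(k1+1) := (pow_succ ρ k1).symm
  have haeR : ∀ᵐ ω ∂μ, specNormR (Rr ω) ≤ ρ^k := ae_prodDesc_bound hρ' hSbound (t+k1) k (by omega)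
  -- Step B: integral equals ∫ trace (Sbar^k * QQᵀ)
  have stepB : ∫ ω, Matrix.trace (Rr ω * (Q ω * (Q ω)ᵀ)) ∂μ
      = ∫ ω, Matrix.trace ((Sbar ^ k) * (Q ω * (Q ω)ᵀ)) ∂μ := by
    have hintRQ : ∀ a b : Fin N,
        Integrable (fun ω => Rr ω a b * (Q ω * (Q ω)ᵀ) b a) μ := by
      intro a b
      apply integrable_of_ae_bound
        (((hmeasR.matEntry a b).mul (hmeasQQ.matEntry b a)).aestronglyMeasurable)
        (C := ρ^k * (ρ^(k1+1) * ρ^(k1+1)))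
      filter_upwards [haeQ, haeR] with ω h1 h2
      rw [Pi.mul_apply, abs_mul]
      apply mul_le_mul ((entry_le_specNormR _ a b).trans h2)
      · refine (entry_le_specNormR _ b a).trans ?_
        calc specNormR (Q ω * (Q ω)ᵀ) ≤ specNormR (Q ω) * specNormR (Q ω)ᵀ :=
              specNormR_mul_le _ _
          _ = specNormR (Q ω) * specNormR (Q ω) := by rw [specNormR_transpose]
          _ ≤ ρ^(k1+1) * ρ^(k1+1) := mul_le_mul h1 h1 (specNormR_nonneg _) (by positivity)
      · exact abs_nonneg _
      · positivity
    have hintQQ : ∀ a b : Fin N, Integrable (fun ω => (Q ω * (Q ω)ᵀ) b a) μ := by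
      intro a b
      apply integrable_of_ae_bound ((hmeasQQ.matEntry b a).aestronglyMeasurable)
        (C := ρ^(k1+1) * ρ^(k1+1))
      filter_upwards [haeQ] with ω h1
      refine (entry_le_specNormR _ b a).trans ?_
      calc specNormR (Q ω * (Q ω)ᵀ) ≤ specNormR (Q ω) * specNormR (Q ω)ᵀ :=
            specNormR_mul_le _ _
        _ = specNormR (Q ω) * specNormR (Q ω) := by rw [specNormR_transpose]
        _ ≤ ρ^(k1+1) * ρ^(k1+1) := mul_le_mul h1 h1 (specNormR_nonneg _) (by positivity)
    have hsplitint : ∀ a b : Fin N,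
        ∫ ω, Rr ω a b * (Q ω * (Q ω)ᵀ) b a ∂μ
          = (Sbar ^ k) a b * ∫ ω, (Q ω * (Q ω)ᵀ) b a ∂μ := by
      intro a b
      have hkey := key_integral_mul (a := t - 1) (b := t + k1) (c := t + k1 + k)
        hSmeas hSindep (by omega) hT
        (fun u => ((prodD u t k1 * u (t-1)) * (prodD u t k1 * u (t-1))ᵀ) b a)
        (fun u => prodD u (t+k1) k a b)
        (((((measurable_prodD (fun (u : ℕ → Matrix (Fin N) (Fin N) ℝ) n => u n) t k1
              (fun n _ _ => measurable_pi_apply n)).matMul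
            (measurable_pi_apply (t-1))).matMul
            ((measurable_prodD (fun (u : ℕ → Matrix (Fin N) (Fin N) ℝ) n => u n) t k1
              (fun n _ _ => measurable_pi_apply n)).matMul
            (measurable_pi_apply (t-1))).matTranspose)).matEntry b a)
        ((measurable_prodD (fun (u : ℕ → Matrix (Fin N) (Fin N) ℝ) n => u n) (t+k1) k
            (fun n _ _ => measurable_pi_apply n)).matEntry a b)
        (fun u u' h => by
          show ((prodD u t k1 * u (t-1)) * (prodD u t k1 * u (t-1))ᵀ) b a
            = ((prodD u' t k1 * u' (t-1)) * (prodD u' t k1 * u' (t-1))ᵀ) b a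
          rw [prodD_congr (f := u) (g := u') (fun n h1 h2 => h n (by omega) (by omega)),
            h (t-1) (by omega) (by omega)])
        (fun u u' h => by
          show prodD u (t+k1) k a b = prodD u' (t+k1) k a b
          rw [prodD_congr (f := u) (g := u') (fun n h1 h2 => h n (by omega) (by omega))])
      have e2 : ∀ ω, Rr ω a b * (Q ω * (Q ω)ᵀ) b a
          = ((prodD (fun n => S n ω) t k1 * S (t-1) ω) *
              (prodD (fun n => S n ω) t k1 * S (t-1) ω)ᵀ) b a *
            prodD (fun n => S n ω) (t+k1) k a b := by
        intro ω
        rw [hRr, hQ]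
        simp only [prodDesc_eq_prodD]
        ring
      simp only [e2]
      rw [hkey]
      have e3 : ∫ ω, prodD (fun n => S n ω) (t+k1) k a b ∂μ = (Sbar ^ k) a b := by
        rw [show (fun ω => prodD (fun n => S n ω) (t+k1) k a b)
            = fun ω => prodDesc S (t+k1) ω k a b from
          funext fun ω => by rw [prodDesc_eq_prodD]]
        exact mean_prodDesc hSmeas hSindep hρ' hSbound Sbar hSmean (t+k1) k (by omega) a b
      rw [e3]
      have e4 : (fun ω => ((prodD (fun n => S n ω) t k1 * S (t-1) ω) *
            (prodD (fun n => S n ω) t k1 * S (t-1) ω)ᵀ) b a)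
          = fun ω => (Q ω * (Q ω)ᵀ) b a := by
        funext ω
        rw [hQ]
        simp only [prodDesc_eq_prodD]
      rw [e4, mul_comm]
    calc ∫ ω, Matrix.trace (Rr ω * (Q ω * (Q ω)ᵀ)) ∂μ
        = ∫ ω, ∑ a, ∑ b, Rr ω a b * (Q ω * (Q ω)ᵀ) b a ∂μ := by
          simp only [trace_expand]
      _ = ∑ a, ∑ b, ∫ ω, Rr ω a b * (Q ω * (Q ω)ᵀ) b a ∂μ := by
          rw [integral_finset_sum _ fun a _ => integrable_finset_sum _ fun b _ => hintRQ a b]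
          exact Finset.sum_congr rfl fun a _ =>
            integral_finset_sum _ fun b _ => hintRQ a b
      _ = ∑ a, ∑ b, (Sbar ^ k) a b * ∫ ω, (Q ω * (Q ω)ᵀ) b a ∂μ := by
          exact Finset.sum_congr rfl fun a _ => Finset.sum_congr rfl fun b _ => hsplitint a b
      _ = ∑ a, ∑ b, ∫ ω, (Sbar ^ k) a b * (Q ω * (Q ω)ᵀ) b a ∂μ := by
          refine Finset.sum_congr rfl fun a _ => Finset.sum_congr rfl fun b _ => ?_
          rw [integral_const_mul]
      _ = ∫ ω, ∑ a, ∑ b, (Sbar ^ k) a b * (Q ω * (Q ω)ᵀ) b a ∂μ := by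
          rw [integral_finset_sum _ (f := fun a ω => ∑ b, (Sbar ^ k) a b * (Q ω * (Q ω)ᵀ) b a)
            fun a _ => integrable_finset_sum _ fun b _ =>
            (hintQQ a b).const_mul _]
          exact Finset.sum_congr rfl fun a _ =>
            (integral_finset_sum _ fun b _ => (hintQQ a b).const_mul _).symm
      _ = ∫ ω, Matrix.trace ((Sbar ^ k) * (Q ω * (Q ω)ᵀ)) ∂μ := by
          simp only [trace_expand]
  -- Step C: final bound
  have hMk : specNormR (Sbar ^ k) ≤ (p * ρ)^k := specNormR_pow_le (by positivity) hSbar k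
  have stepC : |∫ ω, Matrix.trace ((Sbar ^ k) * (Q ω * (Q ω)ᵀ)) ∂μ|
      ≤ (N : ℝ) * ρ^2 * p^k * ρ^(2*k1 + k) := by
    have hb : ∀ᵐ ω ∂μ, ‖Matrix.trace ((Sbar ^ k) * (Q ω * (Q ω)ᵀ))‖
        ≤ (N : ℝ) * ρ^2 * p^k * ρ^(2*k1 + k) := by
      filter_upwards [haeQ] with ω h1
      rw [Real.norm_eq_abs]
      refine (trace_mul_QQT_le _ _).trans ?_
      calc specNormR (Sbar ^ k) * ((N : ℝ) * specNormR (Q ω) ^ 2)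
          ≤ (p * ρ)^k * ((N : ℝ) * (ρ^(k1+1)) ^ 2) := by
            apply mul_le_mul hMk _ (by positivity) (by positivity)
            apply mul_le_mul_of_nonneg_left _ (by positivity)
            exact pow_le_pow_left₀ (specNormR_nonneg _) h1 2
        _ = (N : ℝ) * ρ^2 * p^k * ρ^(2*k1 + k) := by
            rw [mul_pow, ← pow_mul,
              show (k1 + 1) * 2 = 2 + 2 * k1 from by omega, pow_add,
              show (2 : ℕ) * k1 + k = 2 * k1 + k from rfl, pow_add]
            ring
    have := norm_integral_le_of_norm_le_const (μ := μ) hb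
    rwa [probReal_univ, mul_one, Real.norm_eq_abs] at this
  calc |∫ ω, Matrix.trace ((prodDesc S t ω k1)ᵀ * prodDesc S t ω (k1 + k) *
        (S (t-1) ω * (S (t-1) ω)ᵀ)) ∂μ|
      = |∫ ω, Matrix.trace (Rr ω * (Q ω * (Q ω)ᵀ)) ∂μ| := by
        simp only [stepA]
    _ = |∫ ω, Matrix.trace ((Sbar ^ k) * (Q ω * (Q ω)ᵀ)) ∂μ| := by rw [stepB]
    _ ≤ _ := stepC

/-- Noise gain bound of **Remark 5** (estimated noise gain regularizer for FIR
graph filter design over random graphs).  With i.i.d. random shifts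
`S_0, …, S_{T−1}` of mean `S̄`, `‖S_τ‖₂ ≤ ρ` a.s., `‖S̄‖₂ ≤ p ρ`, and the
stochastic sub-filter `H = Σ_{τ=t}^{T} φ_τ S_{τ−1} ⋯ S_t` with `G = Hᵀ H`,
`tr E[G S_{t−1} S_{t−1}ᵀ] ≤ N ρ² Σ_{τ₁,τ₂=t}^{T} |φ_{τ₁}||φ_{τ₂}| p^{|τ₁−τ₂|} ρ^{τ₁+τ₂−2t}`. -/
theorem stmt_10 {N T t : ℕ} (hN : 1 ≤ N) (hT : 1 ≤ T) (ht : 1 ≤ t) (htT : t ≤ T)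
    (φ : ℕ → ℝ) (ρ p : ℝ) (hρ : 0 < ρ) (hp0 : 0 ≤ p) (hp1 : p ≤ 1)
    {Ω : Type*} [MeasurableSpace Ω] (μ : Measure Ω) [IsProbabilityMeasure μ]
    (S : ℕ → Ω → Matrix (Fin N) (Fin N) ℝ)
    (hSmeas : ∀ τ, τ < T → Measurable (S τ))
    (hSindep : iIndepFun (fun τ : Fin T => S τ) μ)
    (hSident : ∀ τ, τ < T → IdentDistrib (S τ) (S 0) μ μ)
    (hSbound : ∀ τ, τ < T → ∀ᵐ ω ∂μ, specNormR (S τ ω) ≤ ρ)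
    (Sbar : Matrix (Fin N) (Fin N) ℝ)
    (hSmean : ∀ τ, τ < T → ∀ i j, ∫ ω, S τ ω i j ∂μ = Sbar i j)
    (hSbar : specNormR Sbar ≤ p * ρ)
    (H : Ω → Matrix (Fin N) (Fin N) ℝ)
    (hH : ∀ ω, H ω = ∑ τ ∈ Finset.Icc t T, φ τ • prodDesc S t ω (τ - t)) :
    Matrix.trace (EM μ (fun ω => (H ω)ᵀ * H ω * (S (t - 1) ω * (S (t - 1) ω)ᵀ)))
      ≤ N * ρ ^ 2 *
        ∑ τ₁ ∈ Finset.Icc t T, ∑ τ₂ ∈ Finset.Icc t T,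
          |φ τ₁| * |φ τ₂| * p ^ (max τ₁ τ₂ - min τ₁ τ₂) * ρ ^ (τ₁ + τ₂ - 2 * t) :=    by
  classical
  set W : Ω → Matrix (Fin N) (Fin N) ℝ := fun ω => S (t-1) ω * (S (t-1) ω)ᵀ with hW
  set PM : ℕ → ℕ → Ω → Matrix (Fin N) (Fin N) ℝ := fun τ1 τ2 ω =>
    (prodDesc S t ω (τ1-t))ᵀ * prodDesc S t ω (τ2-t) * W ω with hPM
  have hρ' : 0 ≤ ρ := le_of_lt hρ
  have htT' : t - 1 < T := by omega
  have hmeasSs : Measurable (S (t-1)) := hSmeas _ htT'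
  have hmeasW : Measurable W := hmeasSs.matMul hmeasSs.matTranspose
  have hmeasPM : ∀ τ1 ∈ Finset.Icc t T, ∀ τ2 ∈ Finset.Icc t T, Measurable (PM τ1 τ2) := by
    intro τ1 h1 τ2 h2
    rw [Finset.mem_Icc] at h1 h2
    exact ((measurable_prodDesc hSmeas t (τ1-t) (by omega)).matTranspose.matMul
      (measurable_prodDesc hSmeas t (τ2-t) (by omega))).matMul hmeasW
  have haePM : ∀ τ1 ∈ Finset.Icc t T, ∀ τ2 ∈ Finset.Icc t T,
      ∀ᵐ ω ∂μ, specNormR (PM τ1 τ2 ω) ≤ ρ^(τ1-t) * ρ^(τ2-t) * (ρ * ρ) := by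
    intro τ1 h1 τ2 h2
    rw [Finset.mem_Icc] at h1 h2
    filter_upwards [ae_prodDesc_bound hρ' hSbound t (τ1-t) (by omega),
      ae_prodDesc_bound hρ' hSbound t (τ2-t) (by omega), hSbound (t-1) htT'] with ω b1 b2 b3
    have hWb : specNormR (W ω) ≤ ρ * ρ := by
      calc specNormR (W ω) ≤ specNormR (S (t-1) ω) * specNormR ((S (t-1) ω)ᵀ) :=
            specNormR_mul_le _ _
        _ = specNormR (S (t-1) ω) * specNormR (S (t-1) ω) := by rw [specNormR_transpose]
        _ ≤ ρ * ρ := mul_le_mul b3 b3 (specNormR_nonneg _) hρ'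
    calc specNormR (PM τ1 τ2 ω)
        ≤ specNormR ((prodDesc S t ω (τ1-t))ᵀ * prodDesc S t ω (τ2-t)) * specNormR (W ω) :=
          specNormR_mul_le _ _
      _ ≤ (specNormR ((prodDesc S t ω (τ1-t))ᵀ) * specNormR (prodDesc S t ω (τ2-t)))
            * specNormR (W ω) :=
          mul_le_mul_of_nonneg_right (specNormR_mul_le _ _) (specNormR_nonneg _)
      _ ≤ ρ^(τ1-t) * ρ^(τ2-t) * (ρ * ρ) := by
          rw [specNormR_transpose]
          apply mul_le_mul _ hWb (specNormR_nonneg _) (by positivity)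
          exact mul_le_mul b1 b2 (specNormR_nonneg _) (by positivity)
  have hintPM : ∀ τ1 ∈ Finset.Icc t T, ∀ τ2 ∈ Finset.Icc t T, ∀ i j : Fin N,
      Integrable (fun ω => PM τ1 τ2 ω i j) μ := by
    intro τ1 h1 τ2 h2 i j
    apply integrable_of_ae_bound
      (((hmeasPM τ1 h1 τ2 h2).matEntry i j).aestronglyMeasurable)
      (C := ρ^(τ1-t) * ρ^(τ2-t) * (ρ * ρ))
    filter_upwards [haePM τ1 h1 τ2 h2] with ω hb
    exact (entry_le_specNormR _ i j).trans hb
  have hmat : ∀ ω, (H ω)ᵀ * H ω * W ω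
      = ∑ τ1 ∈ Finset.Icc t T, ∑ τ2 ∈ Finset.Icc t T, (φ τ1 * φ τ2) • PM τ1 τ2 ω := by
    intro ω
    rw [hH]
    simp only [Matrix.transpose_sum, Matrix.transpose_smul, Finset.sum_mul, Finset.mul_sum,
      Matrix.smul_mul, Matrix.mul_smul, smul_smul, hPM]
    rw [Finset.sum_comm]
    refine Finset.sum_congr rfl fun a _ => Finset.sum_congr rfl fun b _ => ?_
    rw [mul_comm (φ b) (φ a)]
  have hLHS : Matrix.trace (EM μ (fun ω => (H ω)ᵀ * H ω * (S (t - 1) ω * (S (t - 1) ω)ᵀ)))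
      = ∑ τ1 ∈ Finset.Icc t T, ∑ τ2 ∈ Finset.Icc t T,
          (φ τ1 * φ τ2) * ∫ ω, Matrix.trace (PM τ1 τ2 ω) ∂μ := by
    have e1 : Matrix.trace (EM μ (fun ω => (H ω)ᵀ * H ω * (S (t - 1) ω * (S (t - 1) ω)ᵀ)))
        = ∑ i, ∫ ω, ((H ω)ᵀ * H ω * W ω) i i ∂μ := rfl
    rw [e1]
    have e2 : ∀ i : Fin N, ∫ ω, ((H ω)ᵀ * H ω * W ω) i i ∂μ
        = ∑ τ1 ∈ Finset.Icc t T, ∑ τ2 ∈ Finset.Icc t T,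
            (φ τ1 * φ τ2) * ∫ ω, PM τ1 τ2 ω i i ∂μ := by
      intro i
      have e3 : ∀ ω, ((H ω)ᵀ * H ω * W ω) i i
          = ∑ τ1 ∈ Finset.Icc t T, ∑ τ2 ∈ Finset.Icc t T,
              (φ τ1 * φ τ2) * PM τ1 τ2 ω i i := by
        intro ω
        rw [hmat ω]
        simp only [Matrix.sum_apply, Matrix.smul_apply, smul_eq_mul]
      simp only [e3]
      rw [integral_finset_sum _ (fun τ1 h1 => integrable_finset_sum _ (fun τ2 h2 =>
        (hintPM τ1 h1 τ2 h2 i i).const_mul _))]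
      refine Finset.sum_congr rfl fun τ1 h1 => ?_
      rw [integral_finset_sum _ (fun τ2 h2 => (hintPM τ1 h1 τ2 h2 i i).const_mul _)]
      refine Finset.sum_congr rfl fun τ2 h2 => ?_
      rw [integral_const_mul]
    simp only [e2]
    rw [Finset.sum_comm]
    refine Finset.sum_congr rfl fun τ1 h1 => ?_
    rw [Finset.sum_comm]
    refine Finset.sum_congr rfl fun τ2 h2 => ?_
    rw [← Finset.mul_sum]
    congr 1
    rw [← integral_finset_sum _ (fun i _ => hintPM τ1 h1 τ2 h2 i i)]
    rfl
  rw [hLHS]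
  -- bound each term
  have hterm : ∀ τ1 ∈ Finset.Icc t T, ∀ τ2 ∈ Finset.Icc t T,
      (φ τ1 * φ τ2) * ∫ ω, Matrix.trace (PM τ1 τ2 ω) ∂μ
        ≤ (N : ℝ) * ρ^2 * (|φ τ1| * |φ τ2| * p ^ (max τ1 τ2 - min τ1 τ2)
            * ρ ^ (τ1 + τ2 - 2 * t)) := by
    intro τ1 h1 τ2 h2
    rw [Finset.mem_Icc] at h1 h2
    set σ1 := min τ1 τ2 with hσ1
    set σ2 := max τ1 τ2 with hσ2
    have hsym : ∀ ω, Matrix.trace (PM τ1 τ2 ω) = Matrix.trace (PM σ1 σ2 ω) := by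
      intro ω
      have hWt : (W ω)ᵀ = W ω := by
        rw [hW]
        simp only [Matrix.transpose_mul, Matrix.transpose_transpose]
      rcases le_total τ1 τ2 with hle | hle
      · rw [hσ1, hσ2, min_eq_left hle, max_eq_right hle]
      · rw [hσ1, hσ2, min_eq_right hle, max_eq_left hle, hPM]
        exact trace_sym _ _ _ hWt
    set k1 := σ1 - t with hk1
    set k := σ2 - σ1 with hk
    have hs1 : σ1 - t = k1 := rfl
    have hs2 : σ2 - t = k1 + k := by omega
    have hbound := pair_bound hSmeas hSindep hρ hp0 hSbound Sbar hSmean hSbar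
      t k1 k ht (by omega)
    have heq : ∫ ω, Matrix.trace (PM τ1 τ2 ω) ∂μ
        = ∫ ω, Matrix.trace ((prodDesc S t ω k1)ᵀ * prodDesc S t ω (k1 + k) *
            (S (t-1) ω * (S (t-1) ω)ᵀ)) ∂μ := by
      refine integral_congr_ae (Filter.Eventually.of_forall fun ω => ?_)
      show Matrix.trace (PM τ1 τ2 ω) = _
      rw [hsym ω]
      simp only [hPM, hW, hs1, hs2]
    have habs : (φ τ1 * φ τ2) * ∫ ω, Matrix.trace (PM τ1 τ2 ω) ∂μ
        ≤ |φ τ1| * |φ τ2| * ((N : ℝ) * ρ^2 * p^k * ρ^(2*k1 + k)) := by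
      calc (φ τ1 * φ τ2) * ∫ ω, Matrix.trace (PM τ1 τ2 ω) ∂μ
          ≤ |(φ τ1 * φ τ2) * ∫ ω, Matrix.trace (PM τ1 τ2 ω) ∂μ| := le_abs_self _
        _ = |φ τ1| * |φ τ2| * |∫ ω, Matrix.trace (PM τ1 τ2 ω) ∂μ| := by
            rw [abs_mul, abs_mul]
        _ ≤ |φ τ1| * |φ τ2| * ((N : ℝ) * ρ^2 * p^k * ρ^(2*k1 + k)) := by
            apply mul_le_mul_of_nonneg_left _ (by positivity)
            rw [heq]
            exact hbound
    refine habs.trans (le_of_eq ?_)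
    have e6 : τ1 + τ2 - 2 * t = 2 * k1 + k := by omega
    rw [e6]
    ring
  calc ∑ τ1 ∈ Finset.Icc t T, ∑ τ2 ∈ Finset.Icc t T,
        (φ τ1 * φ τ2) * ∫ ω, Matrix.trace (PM τ1 τ2 ω) ∂μ
      ≤ ∑ τ1 ∈ Finset.Icc t T, ∑ τ2 ∈ Finset.Icc t T,
          (N : ℝ) * ρ^2 * (|φ τ1| * |φ τ2| * p ^ (max τ1 τ2 - min τ1 τ2)
            * ρ ^ (τ1 + τ2 - 2 * t)) := by
        apply Finset.sum_le_sum
        intro τ1 h1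
        apply Finset.sum_le_sum
        intro τ2 h2
        exact hterm τ1 h1 τ2 h2
    _ = (N : ℝ) * ρ^2 * ∑ τ1 ∈ Finset.Icc t T, ∑ τ2 ∈ Finset.Icc t T,
          |φ τ1| * |φ τ2| * p ^ (max τ1 τ2 - min τ1 τ2) * ρ ^ (τ1 + τ2 - 2 * t) := by
        rw [Finset.mul_sum]
        refine Finset.sum_congr rfl fun τ1 _ => ?_
        rw [Finset.mul_sum]
end

section
/- Let M ≥ 1 and N ≥ 1, let W be a real symmetric positive semidefinite (MN)×(MN) matrix, and let A and B be real (MN)×(MN) matrices. For α ∈ ℝ^N, let D(α) be the block-diagonal (MN)×(MN) matrix whose i-th M×M diagonal block is α_i I_M. Assume that for every i ∈ {1, …, N}, s_i := Σ_{j=1}^{M} [Bᵀ W B]_{(i−1)M+j, (i−1)M+j} > 0. Then the function g(α) = tr( (A − D(α))ᵀ Bᵀ W B (A − D(α)) ) attains its minimum over ℝ^N exactly at α_i = ( Σ_{j=1}^{M} [Bᵀ W B A]_{(i−1)M+j, (i−1)M+j} ) / s_i for every i. -/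
open Matrix
open scoped BigOperators

/-- **Corollary of Theorem 2** (Appendix B): optimal scalar-per-node quantitative
error feedback coefficients for quantized ATC diffusion.  The index set
`Fin N × Fin M` encodes the `(MN)`-dimensional augmented space, where the pair
`(i, j)` corresponds to the index `(i−1)M + j`.  The block diagonal matrix
`D(α)` with `i`-th diagonal block `α_i I_M` is `Matrix.diagonal (fun p => α p.1)`.
Assuming each `s_i = Σ_j [Bᵀ W B]_{(i,j),(i,j)} > 0`, the function
`g(α) = tr((A − D(α))ᵀ Bᵀ W B (A − D(α)))` attains its minimum over `ℝ^N`
exactly at `α_i = (Σ_j [Bᵀ W B A]_{(i,j),(i,j)}) / s_i`. -/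
theorem stmt_19 {M N : ℕ} (hM : 1 ≤ M) (hN : 1 ≤ N)
    (W : Matrix (Fin N × Fin M) (Fin N × Fin M) ℝ) (hW : W.PosSemidef)
    (A B : Matrix (Fin N × Fin M) (Fin N × Fin M) ℝ)
    (s : Fin N → ℝ)
    (hs : ∀ i, s i = ∑ j : Fin M, (Bᵀ * W * B) (i, j) (i, j))
    (hspos : ∀ i, 0 < s i)
    (g : (Fin N → ℝ) → ℝ)
    (hg : ∀ α, g α = Matrix.trace
        ((A - Matrix.diagonal (fun p : Fin N × Fin M => α p.1))ᵀ * (Bᵀ * W * B) *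
          (A - Matrix.diagonal (fun p : Fin N × Fin M => α p.1))))
    (αstar : Fin N → ℝ)
    (hαstar : ∀ i, αstar i = (∑ j : Fin M, (Bᵀ * W * B * A) (i, j) (i, j)) / s i) :
    (∀ β : Fin N → ℝ, g αstar ≤ g β) ∧
    (∀ β : Fin N → ℝ, g β = g αstar → β = αstar) := by

  classical
  set C : Matrix (Fin N × Fin M) (Fin N × Fin M) ℝ := Bᵀ * W * B with hC
  have hWt : Wᵀ = W := by
    have := hW.1
    simpa [Matrix.IsHermitian, Matrix.conjTranspose, Matrix.map, Matrix.transpose] using this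
  have hCsymm : Cᵀ = C := by
    rw [hC, Matrix.transpose_mul, Matrix.transpose_mul, Matrix.transpose_transpose, hWt,
      Matrix.mul_assoc]
  set t : Fin N → ℝ := fun i => ∑ j : Fin M, (C * A) (i, j) (i, j) with ht
  have key : ∀ α : Fin N → ℝ,
      g α = Matrix.trace (Aᵀ * C * A) + ∑ i, (α i ^ 2 * s i - 2 * (α i * t i)) := by
    intro α
    rw [hg]
    set D : Matrix (Fin N × Fin M) (Fin N × Fin M) ℝ :=
      Matrix.diagonal (fun p : Fin N × Fin M => α p.1) with hD
    have hDt : Dᵀ = D := Matrix.diagonal_transpose _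
    have expand : (A - D)ᵀ * C * (A - D)
        = Aᵀ * C * A - Aᵀ * C * D - Dᵀ * C * A + Dᵀ * C * D := by
      rw [Matrix.transpose_sub, Matrix.sub_mul, Matrix.sub_mul, Matrix.mul_sub, Matrix.mul_sub]
      abel
    have hdiagmul : ∀ X : Matrix (Fin N × Fin M) (Fin N × Fin M) ℝ,
        Matrix.trace (D * X) = ∑ p : Fin N × Fin M, α p.1 * X p p := by
      intro X
      simp [Matrix.trace, Matrix.diag, hD, Matrix.diagonal_mul]
    have h2 : Matrix.trace (Dᵀ * C * A) = ∑ i, α i * t i := by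
      rw [hDt, Matrix.mul_assoc, hdiagmul, Fintype.sum_prod_type]
      simp [ht, Finset.mul_sum]
    have h1 : Matrix.trace (Aᵀ * C * D) = ∑ i, α i * t i := by
      rw [← Matrix.trace_transpose (Aᵀ * C * D)]
      have : (Aᵀ * C * D)ᵀ = Dᵀ * C * A := by
        rw [Matrix.transpose_mul, Matrix.transpose_mul, Matrix.transpose_transpose, hCsymm,
          ← Matrix.mul_assoc]
      rw [this, h2]
    have h3 : Matrix.trace (Dᵀ * C * D) = ∑ i, α i ^ 2 * s i := by
      rw [hDt]
      have : Matrix.trace (D * C * D) = ∑ p : Fin N × Fin M, α p.1 * C p p * α p.1 := by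
        simp [Matrix.trace, Matrix.diag, hD, Matrix.diagonal_mul, Matrix.mul_diagonal]
      rw [this, Fintype.sum_prod_type]
      refine Finset.sum_congr rfl fun i _ => ?_
      rw [hs i, Finset.mul_sum]
      refine Finset.sum_congr rfl fun j _ => ?_
      ring
    rw [expand, Matrix.trace_add, Matrix.trace_sub, Matrix.trace_sub, h1, h2, h3]
    rw [Finset.sum_sub_distrib, ← Finset.mul_sum]
    ring
  have hts : ∀ i, t i = αstar i * s i := by
    intro i
    rw [hαstar i, div_mul_cancel₀ _ (ne_of_gt (hspos i))]
  have hdiff : ∀ β, g β = g αstar + ∑ i, s i * (β i - αstar i) ^ 2 := by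
    intro β
    rw [key β, key αstar]
    have hterm : ∀ i : Fin N, β i ^ 2 * s i - 2 * (β i * t i)
        = (αstar i ^ 2 * s i - 2 * (αstar i * t i)) + s i * (β i - αstar i) ^ 2 := by
      intro i
      rw [hts i]
      ring
    rw [Finset.sum_congr rfl fun i _ => hterm i, Finset.sum_add_distrib]
    ring
  constructor
  · intro β
    rw [hdiff β]
    have : (0:ℝ) ≤ ∑ i, s i * (β i - αstar i) ^ 2 :=
      Finset.sum_nonneg fun i _ => mul_nonneg (le_of_lt (hspos i)) (sq_nonneg _)
    linarith
  · intro β hβ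
    rw [hdiff β] at hβ
    have hsum : ∑ i, s i * (β i - αstar i) ^ 2 = 0 := by linarith
    have hzero : ∀ i ∈ Finset.univ, s i * (β i - αstar i) ^ 2 = 0 :=
      (Finset.sum_eq_zero_iff_of_nonneg
        (fun i _ => mul_nonneg (le_of_lt (hspos i)) (sq_nonneg _))).mp hsum
    funext i
    have := hzero i (Finset.mem_univ i)
    have h2 : (β i - αstar i) ^ 2 = 0 := by
      rcases mul_eq_zero.mp this with h | h
      · exact absurd h (ne_of_gt (hspos i))
      · exact h
    have := pow_eq_zero_iff (n := 2) (by norm_num) |>.mp h2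
    linarith [sub_eq_zero.mp this]
end
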